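/- arXiv:math/0411386 — 7 statements merged into one kernel-verified Lean document; each statement's English description precedes it below -/
import Mathlib

section
/- For every fixed x ∈ ℝ^d and t > 0, the map (s, y) ↦ V^s(x, y, t) is continuous on [0,∞) × ℝ^d. -/
open MeasureTheory Set Filter Topology
open scoped RealInnerProductSpace ENNReal

/-- The frozen rate function `I^s_{0T}` on paths `[0,T] → ℝ^d`:
`(1/2)∫₀^T ‖φ̇_t − b(s,φ_t)‖² dt` if `φ` is absolutely continuous with `L²` derivative,
and `+∞` otherwise. -/
noncomputable def frozenRate {d : ℕ}
    (b : ℝ → EuclideanSpace ℝ (Fin d) → EuclideanSpace ℝ (Fin d))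
    (s T : ℝ) (φ : ℝ → EuclideanSpace ℝ (Fin d)) : ℝ≥0∞ :=
  ⨅ g ∈ {g : ℝ → EuclideanSpace ℝ (Fin d) |
      MemLp g 2 (volume.restrict (Ioc (0:ℝ) T)) ∧
      ∀ t ∈ Icc (0:ℝ) T, φ t = φ 0 + ∫ u in (0:ℝ)..t, g u},
    ∫⁻ t in Ioc (0:ℝ) T, ENNReal.ofReal ((1/2) * ‖g t - b s (φ t)‖^2)

/-- The cost function `V^s(x,y,t)`. -/
noncomputable def costFn {d : ℕ}
    (b : ℝ → EuclideanSpace ℝ (Fin d) → EuclideanSpace ℝ (Fin d))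
    (s : ℝ) (x y : EuclideanSpace ℝ (Fin d)) (t : ℝ) : ℝ≥0∞ :=
  ⨅ φ ∈ {φ : ℝ → EuclideanSpace ℝ (Fin d) |
      ContinuousOn φ (Icc (0:ℝ) t) ∧ φ 0 = x ∧ φ t = y},
    frozenRate b s t φ

/-!
The cost `V^s(x, y, t)` is the infimum of `½‖g - b(s, φ)‖²` in `L²(0, t)` over the paths
`φ = x + ∫₀^· g` from `x` to `y`. Adding `u ↦ (u / t) • (y' - y)` to such a path makes it end at
`y'`, and changes this `L²` defect by at most `√t (‖y' - y‖ / t + K ‖y' - y‖ + κ |s' - s|)`,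
where `K` and `κ` are the space and time Lipschitz constants of `b` on a ball containing both
paths. Since `⟪z, b(s, z)⟫ < 0` outside `B_{R₀}`, a path with defect `a` stays in the ball of
radius `max ‖x‖ R₀ + √t a` (compare `‖φ‖` with `max ‖x‖ R₀ + ∫ ‖φ̇ - b(s, φ)‖`). Near a point
`(s₀, y₀)` the defects of near-optimal paths are bounded, so these constants are uniform, and the
shift estimate applied in both directions gives continuity.
-/

theorem continuous_of_forall_lipschitz_closedBall {E F : Type*} [NormedAddCommGroup E]
    [NormedAddCommGroup F] {f : E → F}
    (hf : ∀ x, ∃ K, ∀ y₁ ∈ Metric.closedBall x 1, ∀ y₂ ∈ Metric.closedBall x 1,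
      ‖f y₁ - f y₂‖ ≤ K * ‖y₁ - y₂‖) : Continuous f := by
  refine LocallyLipschitz.continuous fun x => ?_
  obtain ⟨K, hK⟩ := hf x
  refine ⟨K.toNNReal, _, Metric.closedBall_mem_nhds x one_pos,
    LipschitzOnWith.of_dist_le_mul fun y₁ h₁ y₂ h₂ => ?_⟩
  rw [dist_eq_norm, dist_eq_norm]
  exact (hK y₁ h₁ y₂ h₂).trans (by gcongr; exact Real.le_coe_toNNReal K)

theorem exists_forall_norm_sub_lt_of_continuous {E F : Type*} [NormedAddCommGroup E]
    [ProperSpace E] [NormedAddCommGroup F] {c : E → F} (hc : Continuous c) (R : ℝ) {ε : ℝ}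
    (hε : 0 < ε) :
    ∃ δ > 0, ∀ z ∈ Metric.closedBall (0 : E) R, ∀ z', ‖z - z'‖ < δ → ‖c z - c z'‖ < ε := by
  obtain ⟨δ, hδ, hcδ⟩ := Metric.uniformContinuousOn_iff.1
    ((isCompact_closedBall (0 : E) (R + 1)).uniformContinuousOn_of_continuous
      hc.continuousOn) ε hε
  refine ⟨min δ 1, by positivity, fun z hz z' hzz' => ?_⟩
  rw [mem_closedBall_zero_iff] at hz
  have hz' : ‖z'‖ ≤ R + 1 := by
    linarith [norm_le_norm_add_norm_sub z z', min_le_right δ 1, norm_sub_rev z z']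
  simpa only [dist_eq_norm] using hcδ z (by rw [mem_closedBall_zero_iff]; linarith) z'
    (mem_closedBall_zero_iff.2 hz') (by rw [dist_eq_norm]; exact hzz'.trans_le (min_le_left _ _))

theorem norm_sub_le_of_lipschitzOn_of_norm_sub_le {E F : Type*} [NormedAddCommGroup E]
    [NormedAddCommGroup F] {f f' : E → F} {s : Set E} {K κ : ℝ}
    (hK : ∀ z₁ ∈ s, ∀ z₂ ∈ s, ‖f z₁ - f z₂‖ ≤ K * ‖z₁ - z₂‖) (hκ : ∀ z ∈ s, ‖f z - f' z‖ ≤ κ)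
    {p q : E} (hp : p ∈ s) (hq : q ∈ s) : ‖f p - f' q‖ ≤ K * ‖p - q‖ + κ :=
  (norm_sub_le_norm_sub_add_norm_sub _ (f q) _).trans (add_le_add (hK p hp q hq) (hκ q hq))

theorem lintegral_ofReal_half_mul_norm_sq {α F : Type*} [MeasurableSpace α] [NormedAddCommGroup F]
    (f : α → F) (μ : Measure α) :
    ∫⁻ u, ENNReal.ofReal ((1/2) * ‖f u‖ ^ 2) ∂μ = 2⁻¹ * eLpNorm f 2 μ ^ 2 := by
  have h := eLpNorm_nnreal_pow_eq_lintegral (f := f) (μ := μ) (p := 2) two_ne_zero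
  simp only [ENNReal.coe_ofNat, NNReal.coe_ofNat, ENNReal.rpow_two] at h
  rw [h, ← lintegral_const_mul' _ _ (by norm_num)]
  refine lintegral_congr fun u => ?_
  rw [ENNReal.ofReal_mul (by norm_num), ENNReal.ofReal_pow (norm_nonneg _), ofReal_norm,
    one_div, ENNReal.ofReal_inv_of_pos two_pos, ENNReal.ofReal_ofNat]

theorem le_ofReal_sqrt_of_half_mul_sq_lt {a : ℝ≥0∞} {M : ℝ}
    (h : 2⁻¹ * a ^ 2 < ENNReal.ofReal M) : a ≤ ENNReal.ofReal √(2 * M) := by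
  have hM : 0 < M := ENNReal.ofReal_pos.1 (pos_of_gt h)
  refine (lt_of_pow_lt_pow_left' 2 ?_).le
  rw [← ENNReal.ofReal_pow (Real.sqrt_nonneg _), Real.sq_sqrt (by positivity),
    ENNReal.ofReal_mul zero_le_two, ENNReal.ofReal_ofNat,
    ← ENNReal.mul_lt_mul_iff_right (a := 2⁻¹) (by simp) (by simp), ← mul_assoc,
    ENNReal.inv_mul_cancel two_ne_zero ENNReal.ofNat_ne_top, one_mul]
  exact h

theorem half_mul_add_sq_le {a : ℝ≥0∞} {A Δ : ℝ} (hA : 0 ≤ A) (ha : a ≤ ENNReal.ofReal A) :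
    2⁻¹ * (a + ENNReal.ofReal Δ) ^ 2 ≤ 2⁻¹ * a ^ 2 + ENNReal.ofReal (A * Δ + Δ ^ 2 / 2) := by
  rcases lt_or_ge Δ 0 with hΔ | hΔ
  · rw [ENNReal.ofReal_of_nonpos hΔ.le, add_zero]
    exact le_self_add
  have ha_top : a ≠ ⊤ := ne_top_of_le_ne_top ENNReal.ofReal_ne_top ha
  have hr : a.toReal ≤ A := ENNReal.toReal_le_of_le_ofReal hA ha
  rw [← ENNReal.ofReal_toReal ha_top, ← ENNReal.ofReal_add ENNReal.toReal_nonneg hΔ,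
    ← ENNReal.ofReal_pow (by positivity), ← ENNReal.ofReal_pow ENNReal.toReal_nonneg,
    ← ENNReal.ofReal_ofNat 2, ← ENNReal.ofReal_inv_of_pos two_pos,
    ← ENNReal.ofReal_mul (by norm_num), ← ENNReal.ofReal_mul (by norm_num),
    ← ENNReal.ofReal_add (by positivity) (by positivity)]
  refine ENNReal.ofReal_le_ofReal ?_
  nlinarith [ENNReal.toReal_nonneg (a := a)]

theorem tendsto_of_le_add_of_le_add {α : Type*} {l : Filter α} {f : α → ℝ≥0∞} {a : ℝ≥0∞}
    (ha : a ≠ ⊤) {ω : α → ℝ} (hω : Tendsto ω l (𝓝 0))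
    (hle : ∀ᶠ p in l, f p ≤ a + ENNReal.ofReal (ω p))
    (hge : ∀ᶠ p in l, a ≤ f p + ENNReal.ofReal (ω p)) : Tendsto f l (𝓝 a) := by
  have hω' := ENNReal.tendsto_nhds_zero.1
    ((ENNReal.continuous_ofReal.tendsto' 0 0 ENNReal.ofReal_zero).comp hω)
  refine (ENNReal.tendsto_nhds ha).2 fun ε hε => ?_
  filter_upwards [hle, hge, hω' ε hε] with p hle hge (hωε : ENNReal.ofReal (ω p) ≤ ε)
  exact ⟨tsub_le_iff_right.2 (hge.trans (by gcongr)), hle.trans (by gcongr)⟩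

section Primitives

variable {E : Type*} [NormedAddCommGroup E]

theorem integral_norm_le_sqrt_mul_eLpNorm {f : ℝ → E} {t : ℝ} (ht : 0 ≤ t)
    (hf : MemLp f 2 (volume.restrict (Ioc 0 t))) :
    ∫ u in (0:ℝ)..t, ‖f u‖ ≤ √t * (eLpNorm f 2 (volume.restrict (Ioc 0 t))).toReal := by
  have hHolder := eLpNorm_le_eLpNorm_mul_rpow_measure_univ one_le_two hf.1
  have hexp : 1 / (1 : ℝ≥0∞).toReal - 1 / (2 : ℝ≥0∞).toReal = 1 / 2 := by norm_num
  rw [Measure.restrict_apply_univ, Real.volume_Ioc, sub_zero, hexp,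
    ENNReal.ofReal_rpow_of_nonneg ht (by norm_num), ← Real.sqrt_eq_rpow] at hHolder
  rw [intervalIntegral.integral_of_le ht, integral_norm_eq_lintegral_enorm hf.1,
    ← eLpNorm_one_eq_lintegral_enorm, mul_comm]
  calc _ ≤ (eLpNorm f 2 (volume.restrict (Ioc 0 t)) * ENNReal.ofReal √t).toReal :=
        ENNReal.toReal_mono (ENNReal.mul_ne_top hf.2.ne ENNReal.ofReal_ne_top) hHolder
    _ = _ := by rw [ENNReal.toReal_mul, ENNReal.toReal_ofReal (Real.sqrt_nonneg t)]

theorem intervalIntegrable_of_memLp {g : ℝ → E} {t : ℝ} {p : ℝ≥0∞} (hp : 1 ≤ p) (ht : 0 ≤ t)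
    (hg : MemLp g p (volume.restrict (Ioc 0 t))) : IntervalIntegrable g volume 0 t :=
  (intervalIntegrable_iff_integrableOn_Ioc_of_le ht).2 (hg.integrable hp)

theorem integral_norm_sub_le_add {a a' e e' : ℝ → E} {t ε : ℝ} (ht : 0 ≤ t)
    (hae : IntervalIntegrable (fun u => a u - e u) volume 0 t)
    (haa' : IntervalIntegrable (fun u => a u - a' u) volume 0 t)
    (ha'e' : IntervalIntegrable (fun u => a' u - e' u) volume 0 t)
    (hee' : ∀ u ∈ Icc 0 t, ‖e u - e' u‖ ≤ ε) :
    ∫ u in (0:ℝ)..t, ‖a' u - e' u‖ ≤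
      (∫ u in (0:ℝ)..t, ‖a u - e u‖) + (∫ u in (0:ℝ)..t, ‖a u - a' u‖) + t * ε := by
  calc ∫ u in (0:ℝ)..t, ‖a' u - e' u‖
      ≤ ∫ u in (0:ℝ)..t, (‖a u - e u‖ + ‖a u - a' u‖ + ε) := by
        refine intervalIntegral.integral_mono_on ht ha'e'.norm
          ((hae.norm.add haa'.norm).add intervalIntegrable_const) fun u hu => ?_
        calc ‖a' u - e' u‖ = ‖(a u - e u) - (a u - a' u) + (e u - e' u)‖ := by congr 1; abel
          _ ≤ ‖a u - e u‖ + ‖a u - a' u‖ + ε :=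
            (norm_add_le _ _).trans (add_le_add (norm_sub_le _ _) (hee' u hu))
    _ = _ := by
        rw [intervalIntegral.integral_add (hae.norm.add haa'.norm) intervalIntegrable_const,
          intervalIntegral.integral_add hae.norm haa'.norm]
        simp

variable [NormedSpace ℝ E]

theorem continuousOn_const_add_primitive (x : E) {g : ℝ → E} {t : ℝ} (ht : 0 ≤ t)
    (hg : IntervalIntegrable g volume 0 t) :
    ContinuousOn (fun u => x + ∫ v in (0:ℝ)..u, g v) (Icc 0 t) := by
  have := intervalIntegral.continuousOn_primitive_interval' hg left_mem_uIcc
  rw [uIcc_of_le ht] at this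
  exact continuousOn_const.add this

theorem norm_integral_sub_integral_le {f g : ℝ → E} {t u : ℝ} (hu : u ∈ Icc 0 t)
    (hf : IntervalIntegrable f volume 0 t) (hg : IntervalIntegrable g volume 0 t) :
    ‖(∫ v in (0:ℝ)..u, f v) - ∫ v in (0:ℝ)..u, g v‖ ≤ ∫ v in (0:ℝ)..t, ‖f v - g v‖ := by
  have hsub : uIcc 0 u ⊆ uIcc 0 t :=
    uIcc_subset_uIcc_left (by rwa [uIcc_of_le (hu.1.trans hu.2)])
  rw [← intervalIntegral.integral_sub (hf.mono_set hsub) (hg.mono_set hsub)]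
  exact (intervalIntegral.norm_integral_le_integral_norm hu.1).trans
    (intervalIntegral.integral_mono_interval le_rfl hu.1 hu.2
      (ae_of_all _ fun _ => norm_nonneg _) (hf.sub hg).norm)

/-- The defect `φ̇ - c(φ)` of the path `φ = x + ∫₀^· g` with respect to the vector field `c`. -/
noncomputable def pathDefect (c : E → E) (x : E) (g : ℝ → E) (u : ℝ) : E :=
  g u - c (x + ∫ v in (0:ℝ)..u, g v)

theorem memLp_pathDefect {c : E → E} (hc : Continuous c) (x : E) {g : ℝ → E} {t : ℝ}
    (ht : 0 ≤ t) (hg : MemLp g 2 (volume.restrict (Ioc 0 t))) :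
    MemLp (pathDefect c x g) 2 (volume.restrict (Ioc 0 t)) := by
  have hpath := hc.comp_continuousOn
    (continuousOn_const_add_primitive x ht (intervalIntegrable_of_memLp one_le_two ht hg))
  obtain ⟨C, hC⟩ := isCompact_Icc.exists_bound_of_continuousOn hpath
  exact hg.sub (MemLp.of_bound ((hpath.mono Ioc_subset_Icc_self).aestronglyMeasurable
    measurableSet_Ioc) C (ae_restrict_of_forall_mem measurableSet_Ioc fun u hu =>
      hC u (Ioc_subset_Icc_self hu)))

theorem eLpNorm_pathDefect_shift_le [CompleteSpace E] {c c' : E → E} (hc : Continuous c)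
    (hc' : Continuous c') {x w : E} {g : ℝ → E} {t L : ℝ} (ht : 0 < t)
    (hg : MemLp g 2 (volume.restrict (Ioc 0 t)))
    (hL : ∀ u ∈ Icc 0 t,
      ‖c (x + ∫ v in (0:ℝ)..u, g v) - c' (x + (∫ v in (0:ℝ)..u, g v) + (u / t) • w)‖ ≤ L) :
    eLpNorm (pathDefect c' x fun u => g u + t⁻¹ • w) 2 (volume.restrict (Ioc 0 t)) ≤
      eLpNorm (pathDefect c x g) 2 (volume.restrict (Ioc 0 t)) +
        ENNReal.ofReal (√t * (t⁻¹ * ‖w‖ + L)) := by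
  set μ := volume.restrict (Ioc (0:ℝ) t)
  set δ := pathDefect c' x (fun u => g u + t⁻¹ • w) - pathDefect c x g
  have hg_int := intervalIntegrable_of_memLp one_le_two ht.le hg
  have hδ : ∀ u ∈ Ioc 0 t, δ u =
      t⁻¹ • w + (c (x + ∫ v in (0:ℝ)..u, g v) - c' (x + (∫ v in (0:ℝ)..u, g v) + (u / t) • w)) := by
    intro u hu
    have hgu : IntervalIntegrable g volume 0 u := hg_int.mono_set
      (uIcc_subset_uIcc_left (by rw [uIcc_of_le ht.le]; exact Ioc_subset_Icc_self hu))
    simp only [δ, Pi.sub_apply, pathDefect]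
    rw [intervalIntegral.integral_add hgu intervalIntegrable_const, intervalIntegral.integral_const,
      sub_zero, smul_smul, ← div_eq_mul_inv, ← add_assoc]
    abel
  have hδ_le : ∀ᵐ u ∂μ, ‖δ u‖ ≤ t⁻¹ * ‖w‖ + L := by
    refine (ae_restrict_iff' measurableSet_Ioc).2 (ae_of_all _ fun u hu => ?_)
    rw [hδ u hu]
    refine (norm_add_le _ _).trans (add_le_add (le_of_eq ?_) (hL u (Ioc_subset_Icc_self hu)))
    rw [norm_smul, Real.norm_of_nonneg (inv_nonneg.2 ht.le)]
  have hmeas := (memLp_pathDefect hc x ht.le hg).1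
  have hmeas' := (memLp_pathDefect hc' x ht.le (hg.add (memLp_const (t⁻¹ • w)))).1
  calc eLpNorm (pathDefect c' x fun u => g u + t⁻¹ • w) 2 μ
      = eLpNorm (pathDefect c x g + δ) 2 μ := by rw [add_sub_cancel]
    _ ≤ eLpNorm (pathDefect c x g) 2 μ + eLpNorm δ 2 μ :=
        eLpNorm_add_le hmeas (hmeas'.sub hmeas) one_le_two
    _ ≤ _ := by
        refine add_le_add le_rfl ((eLpNorm_le_of_ae_bound hδ_le).trans (le_of_eq ?_))
        rw [Measure.restrict_apply_univ, Real.volume_Ioc, sub_zero,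
          ENNReal.ofReal_rpow_of_nonneg ht.le (by norm_num), ← ENNReal.ofReal_mul (by positivity)]
        norm_num [Real.sqrt_eq_rpow]

end Primitives

section Confinement

variable {E : Type*} [NormedAddCommGroup E] [InnerProductSpace ℝ E]

theorem norm_le_max_add_integral_of_hasDerivAt {c : E → E} {R₀ : ℝ}
    (hc : ∀ z, R₀ ≤ ‖z‖ → ⟪z, c z⟫ < 0) {φ φ' : ℝ → E}
    (hφ : ∀ u, HasDerivAt φ (φ' u) u) (hdefect : Continuous fun u => ‖φ' u - c (φ u)‖)
    {t : ℝ} (ht : 0 ≤ t) :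
    ‖φ t‖ ≤ max ‖φ 0‖ R₀ + ∫ u in (0:ℝ)..t, ‖φ' u - c (φ u)‖ := by
  set B₀ := max ‖φ 0‖ R₀
  set H := fun u => ∫ v in (0:ℝ)..u, ‖φ' v - c (φ v)‖
  have hH : ∀ u, HasDerivAt H ‖φ' u - c (φ u)‖ u := fun u =>
    (hdefect.integral_hasStrictDerivAt 0 u).hasDerivAt
  have hH_nonneg : ∀ u, 0 ≤ u → 0 ≤ H u := fun u hu =>
    intervalIntegral.integral_nonneg hu fun _ _ => norm_nonneg _
  have hB₀ : 0 ≤ B₀ := (norm_nonneg _).trans (le_max_left _ _)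
  -- compare `‖φ‖²` with `(B₀ + H)²`: at a contact point `‖φ‖ ≥ R₀`, so the drift pulls inwards
  have key : ‖φ t‖ ^ 2 ≤ (B₀ + H t) ^ 2 := by
    refine image_le_of_deriv_right_lt_deriv_boundary (f := fun u => ‖φ u‖ ^ 2)
      (B := fun u => (B₀ + H u) ^ 2) (B' := fun u => 2 * (B₀ + H u) * ‖φ' u - c (φ u)‖)
      ?_ (fun u _ => (hφ u).norm_sq.hasDerivWithinAt) ?_ (fun u => ?_) ?_ ⟨ht, le_rfl⟩
    · exact (continuous_iff_continuousAt.2 fun u => (hφ u).continuousAt).norm.pow 2 |>.continuousOn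
    · simp only [H, intervalIntegral.integral_same, add_zero]
      exact pow_le_pow_left₀ (norm_nonneg _) (le_max_left _ _) 2
    · exact (((hH u).const_add B₀).fun_pow 2).congr_deriv (by norm_num)
    · intro u hu hcontact
      have hnorm : ‖φ u‖ = B₀ + H u :=
        (pow_left_inj₀ (norm_nonneg _) (add_nonneg hB₀ (hH_nonneg u hu.1)) two_ne_zero).1 hcontact
      have hR₀ : R₀ ≤ ‖φ u‖ :=
        hnorm ▸ (le_max_right _ _).trans (le_add_of_nonneg_right (hH_nonneg u hu.1))
      have hsplit : ⟪φ u, φ' u⟫ = ⟪φ u, c (φ u)⟫ + ⟪φ u, φ' u - c (φ u)⟫ := by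
        rw [inner_sub_right]; ring
      have := real_inner_le_norm (φ u) (φ' u - c (φ u))
      rw [← hnorm]
      linarith [hc _ hR₀]
  exact (pow_le_pow_iff_left₀ (norm_nonneg _) (add_nonneg hB₀ (hH_nonneg t ht)) two_ne_zero).1 key

theorem norm_add_integral_le_of_inner_neg [ProperSpace E] {c : E → E} {R₀ : ℝ}
    (hc_cont : Continuous c) (hc : ∀ z, R₀ ≤ ‖z‖ → ⟪z, c z⟫ < 0) (x : E) {g : ℝ → E} {t : ℝ}
    (ht : 0 ≤ t) (hg : IntervalIntegrable g volume 0 t) :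
    ‖x + ∫ u in (0:ℝ)..t, g u‖ ≤ max ‖x‖ R₀ + ∫ u in (0:ℝ)..t, ‖pathDefect c x g u‖ := by
  set φ := fun u => x + ∫ v in (0:ℝ)..u, g v
  have hφ := continuousOn_const_add_primitive x ht hg
  obtain ⟨R₁, hR₁⟩ := isCompact_Icc.exists_bound_of_continuousOn hφ
  have hdefect_int : IntervalIntegrable (pathDefect c x g) volume 0 t :=
    hg.sub (ContinuousOn.intervalIntegrable (by
      rw [uIcc_of_le ht]; exact hc_cont.comp_continuousOn hφ))
  -- approximate `g` in `L¹` by a continuous `g'` and use the smooth case for `x + ∫ g'`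
  suffices ∀ ε > 0, ‖φ t‖ ≤ max ‖x‖ R₀ + (∫ u in (0:ℝ)..t, ‖pathDefect c x g u‖) + (2 + t) * ε by
    refine le_of_forall_pos_le_add fun ε hε => ?_
    simpa [mul_div_cancel₀ _ (by positivity : (2 + t) ≠ 0)] using this (ε / (2 + t)) (by positivity)
  intro ε hε
  obtain ⟨δ, hδ, hcδ⟩ := exists_forall_norm_sub_lt_of_continuous hc_cont R₁ hε
  set η := min δ ε / 2
  have hη : 0 < η := by positivity
  have hηδ : η < δ := by simp only [η]; linarith [min_le_left δ ε]
  have hηε : η ≤ ε := by simp only [η]; linarith [min_le_right δ ε]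
  obtain ⟨g', -, hgg'_le, hg'_cont, -⟩ := ((intervalIntegrable_iff_integrableOn_Ioc_of_le ht).1
    hg).exists_hasCompactSupport_integral_sub_le hη
  rw [← intervalIntegral.integral_of_le ht] at hgg'_le
  set ψ := fun u => x + ∫ v in (0:ℝ)..u, g' v
  have hψ : ∀ u, HasDerivAt ψ (g' u) u := fun u =>
    ((hg'_cont.integral_hasStrictDerivAt 0 u).hasDerivAt).const_add x
  have hψ_defect_cont : Continuous fun u => g' u - c (ψ u) :=
    hg'_cont.sub (hc_cont.comp (continuous_iff_continuousAt.2 fun u => (hψ u).continuousAt))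
  have hφψ : ∀ u ∈ Icc 0 t, ‖φ u - ψ u‖ ≤ η := fun u hu => by
    simpa only [φ, ψ, add_sub_add_left_eq_sub] using
      (norm_integral_sub_integral_le hu hg (hg'_cont.intervalIntegrable 0 t)).trans hgg'_le
  have hψ_defect := integral_norm_sub_le_add ht hdefect_int
    (hg.sub (hg'_cont.intervalIntegrable 0 t)) (hψ_defect_cont.intervalIntegrable 0 t)
    fun u hu => (hcδ (φ u) (mem_closedBall_zero_iff.2 (hR₁ u hu)) (ψ u)
      ((hφψ u hu).trans_lt hηδ)).le
  have hψ_bound := norm_le_max_add_integral_of_hasDerivAt hc hψ hψ_defect_cont.norm ht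
  have hψ0 : ψ 0 = x := by simp [ψ]
  rw [hψ0] at hψ_bound
  simp only [pathDefect] at hψ_defect ⊢
  linarith [norm_le_norm_add_norm_sub' (φ t) (ψ t), hφψ t ⟨ht, le_rfl⟩]

theorem norm_add_integral_le_of_memLp [ProperSpace E] {c : E → E} {R₀ : ℝ}
    (hc_cont : Continuous c) (hc : ∀ z, R₀ ≤ ‖z‖ → ⟪z, c z⟫ < 0) (x : E) {g : ℝ → E} {t : ℝ}
    (ht : 0 ≤ t) (hg : MemLp g 2 (volume.restrict (Ioc 0 t))) {u : ℝ} (hu : u ∈ Icc 0 t) :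
    ‖x + ∫ v in (0:ℝ)..u, g v‖ ≤
      max ‖x‖ R₀ + √t * (eLpNorm (pathDefect c x g) 2 (volume.restrict (Ioc 0 t))).toReal := by
  have hg_int := intervalIntegrable_of_memLp one_le_two ht hg
  have hdefect := memLp_pathDefect hc_cont x ht hg
  calc ‖x + ∫ v in (0:ℝ)..u, g v‖
      ≤ max ‖x‖ R₀ + ∫ v in (0:ℝ)..u, ‖pathDefect c x g v‖ :=
        norm_add_integral_le_of_inner_neg hc_cont hc x hu.1 (hg_int.mono_set
          (uIcc_subset_uIcc_left (by rwa [uIcc_of_le ht])))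
    _ ≤ max ‖x‖ R₀ + ∫ v in (0:ℝ)..t, ‖pathDefect c x g v‖ := by
        gcongr
        exact intervalIntegral.integral_mono_interval le_rfl hu.1 hu.2 (ae_of_all _ fun _ =>
          norm_nonneg _) (intervalIntegrable_of_memLp one_le_two ht hdefect).norm
    _ ≤ _ := by gcongr; exact integral_norm_le_sqrt_mul_eLpNorm ht hdefect

end Confinement

section Cost

variable {d : ℕ}

local notation "ℝᵈ" => EuclideanSpace ℝ (Fin d)

theorem costFn_le_half_mul_eLpNorm_sq (b : ℝ → ℝᵈ → ℝᵈ) {s t : ℝ} (ht : 0 ≤ t) {x y : ℝᵈ}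
    {g : ℝ → ℝᵈ} (hg : MemLp g 2 (volume.restrict (Ioc 0 t)))
    (hy : x + ∫ u in (0:ℝ)..t, g u = y) :
    costFn b s x y t ≤ 2⁻¹ * eLpNorm (pathDefect (b s) x g) 2 (volume.restrict (Ioc 0 t)) ^ 2 := by
  refine iInf₂_le_of_le (fun u => x + ∫ v in (0:ℝ)..u, g v)
    ⟨continuousOn_const_add_primitive x ht (intervalIntegrable_of_memLp one_le_two ht hg),
      by simp, hy⟩ ?_
  refine iInf₂_le_of_le g ⟨hg, fun u _ => by simp⟩ ?_
  exact (lintegral_ofReal_half_mul_norm_sq _ _).le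

theorem exists_memLp_lt_of_costFn_lt (b : ℝ → ℝᵈ → ℝᵈ) {s t : ℝ} (ht : 0 ≤ t) {x y : ℝᵈ}
    {C : ℝ≥0∞} (h : costFn b s x y t < C) :
    ∃ g : ℝ → ℝᵈ, MemLp g 2 (volume.restrict (Ioc 0 t)) ∧ x + ∫ u in (0:ℝ)..t, g u = y ∧
      2⁻¹ * eLpNorm (pathDefect (b s) x g) 2 (volume.restrict (Ioc 0 t)) ^ 2 < C := by
  simp only [costFn, frozenRate, iInf_lt_iff, mem_ofPred_eq] at h
  obtain ⟨φ, ⟨-, hφ0, hφt⟩, g, ⟨hg, hφg⟩, hlt⟩ := h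
  refine ⟨g, hg, by rw [← hφt, hφg t ⟨ht, le_rfl⟩, hφ0], ?_⟩
  rw [← lintegral_ofReal_half_mul_norm_sq]
  refine lt_of_eq_of_lt (setLIntegral_congr_fun measurableSet_Ioc fun u hu => ?_) hlt
  rw [pathDefect, ← hφ0, ← hφg u (Ioc_subset_Icc_self hu)]

theorem costFn_lt_top (b : ℝ → ℝᵈ → ℝᵈ) {s t : ℝ} (ht : 0 < t) (hc : Continuous (b s))
    (x y : ℝᵈ) : costFn b s x y t < ⊤ := by
  have hy : x + ∫ _ in (0:ℝ)..t, t⁻¹ • (y - x) = y := by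
    rw [intervalIntegral.integral_const, sub_zero, smul_smul, mul_inv_cancel₀ ht.ne', one_smul,
      add_sub_cancel]
  refine (costFn_le_half_mul_eLpNorm_sq b ht.le (memLp_const _) hy).trans_lt ?_
  exact ENNReal.mul_lt_top (by simp)
    (ENNReal.pow_lt_top (memLp_pathDefect hc x ht.le (memLp_const _)).2)

theorem costFn_le_half_mul_eLpNorm_add_sq (b : ℝ → ℝᵈ → ℝᵈ) {s s' t : ℝ} (ht : 0 < t)
    {x y y' : ℝᵈ} {R₀ ρ K κ Δ : ℝ} (hc : Continuous (b s)) (hc' : Continuous (b s'))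
    (hgrow : ∀ z, R₀ ≤ ‖z‖ → ⟪z, b s z⟫ < 0) {g : ℝ → ℝᵈ}
    (hg : MemLp g 2 (volume.restrict (Ioc 0 t))) (hy : x + ∫ u in (0:ℝ)..t, g u = y)
    (hρ : max ‖x‖ R₀ + √t * (eLpNorm (pathDefect (b s) x g) 2 (volume.restrict (Ioc 0 t))).toReal
      + ‖y' - y‖ ≤ ρ) (hK0 : 0 ≤ K)
    (hK : ∀ z₁ ∈ Metric.closedBall 0 ρ, ∀ z₂ ∈ Metric.closedBall 0 ρ,
      ‖b s z₁ - b s z₂‖ ≤ K * ‖z₁ - z₂‖)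
    (hκ : ∀ z ∈ Metric.closedBall 0 ρ, ‖b s z - b s' z‖ ≤ κ)
    (hΔ : √t * (t⁻¹ * ‖y' - y‖ + (K * ‖y' - y‖ + κ)) ≤ Δ) :
    costFn b s' x y' t ≤
      2⁻¹ * (eLpNorm (pathDefect (b s) x g) 2 (volume.restrict (Ioc 0 t)) +
        ENNReal.ofReal Δ) ^ 2 := by
  have hL : ∀ u ∈ Icc 0 t, ‖b s (x + ∫ v in (0:ℝ)..u, g v) -
      b s' (x + (∫ v in (0:ℝ)..u, g v) + (u / t) • (y' - y))‖ ≤ K * ‖y' - y‖ + κ := by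
    intro u hu
    set p := x + ∫ v in (0:ℝ)..u, g v
    have hp_le := norm_add_integral_le_of_memLp hc hgrow x ht.le hg hu
    have hθ : ‖(u / t) • (y' - y)‖ ≤ ‖y' - y‖ := by
      rw [norm_smul, Real.norm_of_nonneg (div_nonneg hu.1 ht.le)]
      exact mul_le_of_le_one_left (norm_nonneg _) ((div_le_one ht).2 hu.2)
    have hp : p ∈ Metric.closedBall 0 ρ :=
      mem_closedBall_zero_iff.2 (by linarith [norm_nonneg (y' - y)])
    have hq : p + (u / t) • (y' - y) ∈ Metric.closedBall 0 ρ :=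
      mem_closedBall_zero_iff.2 (by linarith [norm_add_le p ((u / t) • (y' - y))])
    refine (norm_sub_le_of_lipschitzOn_of_norm_sub_le hK hκ hp hq).trans ?_
    rw [sub_add_cancel_left, norm_neg]
    gcongr
  have hy' : x + ∫ u in (0:ℝ)..t, (g u + t⁻¹ • (y' - y)) = y' := by
    rw [intervalIntegral.integral_add (intervalIntegrable_of_memLp one_le_two ht.le hg)
      intervalIntegrable_const, intervalIntegral.integral_const, sub_zero, smul_smul,
      mul_inv_cancel₀ ht.ne', one_smul, ← add_assoc, hy, add_sub_cancel]
  refine (costFn_le_half_mul_eLpNorm_sq b ht.le (hg.add (memLp_const _)) hy').trans ?_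
  gcongr
  exact (eLpNorm_pathDefect_shift_le hc hc' ht hg hL).trans
    (add_le_add le_rfl (ENNReal.ofReal_le_ofReal hΔ))

theorem costFn_le_costFn_add (b : ℝ → ℝᵈ → ℝᵈ) {s s' t : ℝ} (ht : 0 < t) {x y y' : ℝᵈ}
    {R₀ M ρ K κ Δ : ℝ} (hc : Continuous (b s)) (hc' : Continuous (b s'))
    (hgrow : ∀ z, R₀ ≤ ‖z‖ → ⟪z, b s z⟫ < 0) (hM : costFn b s x y t < ENNReal.ofReal M)
    (hρ : max ‖x‖ R₀ + √t * √(2 * M) + ‖y' - y‖ ≤ ρ) (hK0 : 0 ≤ K)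
    (hK : ∀ z₁ ∈ Metric.closedBall 0 ρ, ∀ z₂ ∈ Metric.closedBall 0 ρ,
      ‖b s z₁ - b s z₂‖ ≤ K * ‖z₁ - z₂‖)
    (hκ : ∀ z ∈ Metric.closedBall 0 ρ, ‖b s z - b s' z‖ ≤ κ)
    (hΔ : √t * (t⁻¹ * ‖y' - y‖ + (K * ‖y' - y‖ + κ)) ≤ Δ) :
    costFn b s' x y' t ≤ costFn b s x y t + ENNReal.ofReal (√(2 * M) * Δ + Δ ^ 2 / 2) := by
  refine ENNReal.le_of_forall_pos_le_add fun ε hε _ => ?_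
  -- shift a near-optimal path for `(s, y)` linearly onto the endpoint `y'`
  obtain ⟨g, hg, hy, hlt⟩ := exists_memLp_lt_of_costFn_lt b ht.le
    (C := min (costFn b s x y t + ε) (ENNReal.ofReal M))
    (lt_min (ENNReal.lt_add_right (hM.trans_le le_top).ne (by simpa using hε.ne')) hM)
  have ha := le_ofReal_sqrt_of_half_mul_sq_lt (hlt.trans_le (min_le_right _ _))
  have hρ' : max ‖x‖ R₀ + √t * (eLpNorm (pathDefect (b s) x g) 2
      (volume.restrict (Ioc 0 t))).toReal + ‖y' - y‖ ≤ ρ := by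
    refine le_trans ?_ hρ
    gcongr
    exact ENNReal.toReal_le_of_le_ofReal (Real.sqrt_nonneg _) ha
  calc costFn b s' x y' t
      ≤ 2⁻¹ * (eLpNorm (pathDefect (b s) x g) 2 (volume.restrict (Ioc 0 t)) +
          ENNReal.ofReal Δ) ^ 2 :=
        costFn_le_half_mul_eLpNorm_add_sq b ht hc hc' hgrow hg hy hρ' hK0 hK hκ hΔ
    _ ≤ 2⁻¹ * eLpNorm (pathDefect (b s) x g) 2 (volume.restrict (Ioc 0 t)) ^ 2 +
          ENNReal.ofReal (√(2 * M) * Δ + Δ ^ 2 / 2) :=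
        half_mul_add_sq_le (Real.sqrt_nonneg _) ha
    _ ≤ costFn b s x y t + ε + ENNReal.ofReal (√(2 * M) * Δ + Δ ^ 2 / 2) := by
        gcongr; exact hlt.le.trans (min_le_left _ _)
    _ = _ := add_right_comm _ _ _

theorem exists_modulus_costFn_le_costFn_add (b : ℝ → ℝᵈ → ℝᵈ) {R₀ t : ℝ} (ht : 0 < t)
    (x : ℝᵈ) (M : ℝ) (hcont : ∀ s ≥ 0, Continuous (b s))
    (hgrow : ∀ s ≥ 0, ∀ z, R₀ ≤ ‖z‖ → ⟪z, b s z⟫ < 0)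
    (hLipX : ∀ R > 0, ∃ K ≥ 0, ∀ s ≥ 0, ∀ z₁ ∈ Metric.closedBall 0 R,
      ∀ z₂ ∈ Metric.closedBall 0 R, ‖b s z₁ - b s z₂‖ ≤ K * ‖z₁ - z₂‖)
    (hLipT : ∀ R > 0, ∃ κ ≥ 0, ∀ s ≥ 0, ∀ s' ≥ 0, ∀ z ∈ Metric.closedBall 0 R,
      ‖b s' z - b s z‖ ≤ κ * |s' - s|) :
    ∃ ω : ℝ → ℝ, Tendsto ω (𝓝 0) (𝓝 0) ∧ ∀ s ≥ 0, ∀ s' ≥ 0, ∀ y y' : ℝᵈ, ‖y' - y‖ ≤ 1 →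
      costFn b s x y t < ENNReal.ofReal M →
        costFn b s' x y' t ≤ costFn b s x y t + ENNReal.ofReal (ω (‖y' - y‖ + |s' - s|)) := by
  set ρ := max ‖x‖ R₀ + √t * √(2 * M) + 1
  have hρ : 0 < ρ := by positivity
  obtain ⟨K, hK0, hK⟩ := hLipX ρ hρ
  obtain ⟨κ, hκ0, hκ⟩ := hLipT ρ hρ
  set L := √t * (t⁻¹ + K + κ)
  refine ⟨fun r => √(2 * M) * (L * r) + (L * r) ^ 2 / 2, ?_, ?_⟩
  · have hω : Continuous fun r => √(2 * M) * (L * r) + (L * r) ^ 2 / 2 := by fun_prop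
    simpa using hω.tendsto 0
  intro s hs s' hs' y y' hy hM
  refine costFn_le_costFn_add b ht (hcont s hs) (hcont s' hs') (hgrow s hs) hM (by linarith)
    hK0 (hK s hs) (fun z hz => hκ s' hs' s hs z hz) ?_
  have hw := norm_nonneg (y' - y)
  have hss' := abs_nonneg (s - s')
  calc √t * (t⁻¹ * ‖y' - y‖ + (K * ‖y' - y‖ + κ * |s - s'|))
      ≤ √t * ((t⁻¹ + K + κ) * (‖y' - y‖ + |s - s'|)) := by
        gcongr
        nlinarith [mul_nonneg (inv_nonneg.2 ht.le) hss', mul_nonneg hK0 hss', mul_nonneg hκ0 hw]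
    _ = L * (‖y' - y‖ + |s' - s|) := by rw [abs_sub_comm]; ring

theorem continuousWithinAt_costFn (b : ℝ → ℝᵈ → ℝᵈ) {R₀ t : ℝ} (ht : 0 < t) (x : ℝᵈ)
    (hcont : ∀ s ≥ 0, Continuous (b s)) (hinward : ∀ s ≥ 0, ∀ z, R₀ ≤ ‖z‖ → ⟪z, b s z⟫ < 0)
    (hLipX : ∀ R > 0, ∃ K ≥ 0, ∀ s ≥ 0, ∀ z₁ ∈ Metric.closedBall 0 R,
      ∀ z₂ ∈ Metric.closedBall 0 R, ‖b s z₁ - b s z₂‖ ≤ K * ‖z₁ - z₂‖)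
    (hLipT : ∀ R > 0, ∃ κ ≥ 0, ∀ s ≥ 0, ∀ s' ≥ 0, ∀ z ∈ Metric.closedBall 0 R,
      ‖b s' z - b s z‖ ≤ κ * |s' - s|) {s₀ : ℝ} (hs₀ : 0 ≤ s₀) (y₀ : ℝᵈ) :
    ContinuousWithinAt (fun p : ℝ × ℝᵈ => costFn b p.1 x p.2 t) (Ici 0 ×ˢ univ) (s₀, y₀) := by
  set V₀ := costFn b s₀ x y₀ t
  have hV₀ : V₀ ≠ ⊤ := (costFn_lt_top b ht (hcont s₀ hs₀) x y₀).ne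
  -- near `(s₀, y₀)` the cost stays below `V₀ + 2`, so the modulus applies in both directions
  have hV₀M : V₀ + 1 < ENNReal.ofReal (V₀.toReal + 2) := by
    rw [ENNReal.ofReal_add ENNReal.toReal_nonneg zero_le_two, ENNReal.ofReal_toReal hV₀,
      ENNReal.ofReal_ofNat]
    exact ENNReal.add_lt_add_left hV₀ (by norm_num)
  obtain ⟨ω, hω, hmod⟩ :=
    exists_modulus_costFn_le_costFn_add b ht x (V₀.toReal + 2) hcont hinward hLipX hLipT
  have hr : Tendsto (fun p : ℝ × ℝᵈ => ‖p.2 - y₀‖ + |p.1 - s₀|)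
      (𝓝[Ici 0 ×ˢ univ] (s₀, y₀)) (𝓝 0) :=
    tendsto_nhdsWithin_of_tendsto_nhds ((by fun_prop : Continuous fun p :
      ℝ × ℝᵈ => ‖p.2 - y₀‖ + |p.1 - s₀|).tendsto' _ _ (by simp))
  have hnear : ∀ᶠ p in 𝓝[Ici 0 ×ˢ univ] (s₀, y₀),
      0 ≤ p.1 ∧ ‖p.2 - y₀‖ ≤ 1 ∧ ω (‖p.2 - y₀‖ + |p.1 - s₀|) ≤ 1 := by
    filter_upwards [self_mem_nhdsWithin, hr.eventually (Iic_mem_nhds one_pos),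
      (hω.comp hr).eventually (Iic_mem_nhds one_pos)] with p hp hr₁ hω₁
    exact ⟨hp.1, by linarith [abs_nonneg (p.1 - s₀), show _ ≤ (1:ℝ) from hr₁], hω₁⟩
  have hle : ∀ᶠ p in 𝓝[Ici 0 ×ˢ univ] (s₀, y₀),
      costFn b p.1 x p.2 t ≤ V₀ + ENNReal.ofReal (ω (‖p.2 - y₀‖ + |p.1 - s₀|)) :=
    hnear.mono fun p hp => hmod s₀ hs₀ p.1 hp.1 y₀ p.2 hp.2.1 (hV₀M.trans_le' le_self_add)
  refine tendsto_of_le_add_of_le_add hV₀ (hω.comp hr) hle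
    ((hnear.and hle).mono fun p ⟨hp, hpV⟩ => ?_)
  have hpM : costFn b p.1 x p.2 t < ENNReal.ofReal (V₀.toReal + 2) :=
    hpV.trans_lt (hV₀M.trans_le' (by gcongr; exact ENNReal.ofReal_le_one.2 hp.2.2))
  have := hmod p.1 hp.1 s₀ hs₀ p.2 y₀ (by rw [norm_sub_rev]; exact hp.2.1) hpM
  rwa [norm_sub_rev, abs_sub_comm] at this

end Cost

theorem cost_continuousOn_general {d : ℕ}
    (b : ℝ → EuclideanSpace ℝ (Fin d) → EuclideanSpace ℝ (Fin d))
    (hLipX : ∀ R > (0:ℝ), ∀ x : EuclideanSpace ℝ (Fin d), ∃ K ≥ (0:ℝ),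
      ∀ t ≥ (0:ℝ), ∀ y₁ ∈ Metric.closedBall x R, ∀ y₂ ∈ Metric.closedBall x R,
        ‖b t y₁ - b t y₂‖ ≤ K * ‖y₁ - y₂‖)
    (hLipT : ∀ R > (0:ℝ), ∀ x : EuclideanSpace ℝ (Fin d), ∃ κ ≥ (0:ℝ),
      ∀ s ≥ (0:ℝ), ∀ t ≥ (0:ℝ), ∀ y ∈ Metric.closedBall x R,
        ‖b t y - b s y‖ ≤ κ * |t - s|)
    (hgrow : ∃ η > (0:ℝ), ∃ R₀ > (0:ℝ), ∀ t ≥ (0:ℝ),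
      ∀ x : EuclideanSpace ℝ (Fin d), R₀ ≤ ‖x‖ → ⟪x, b t x⟫ < -η * ‖x‖) :
    ∀ x : EuclideanSpace ℝ (Fin d), ∀ t > (0:ℝ),
      ContinuousOn (fun p : ℝ × EuclideanSpace ℝ (Fin d) => costFn b p.1 x p.2 t)
        (Ici (0:ℝ) ×ˢ (univ : Set (EuclideanSpace ℝ (Fin d)))) := by
  obtain ⟨η, hη, R₀, -, hgrow⟩ := hgrow
  have hcont : ∀ s ≥ 0, Continuous (b s) := fun s hs =>
    continuous_of_forall_lipschitz_closedBall fun z => by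
      obtain ⟨K, -, hK⟩ := hLipX 1 one_pos z
      exact ⟨K, hK s hs⟩
  have hinward : ∀ s ≥ 0, ∀ z, R₀ ≤ ‖z‖ → ⟪z, b s z⟫ < 0 := fun s hs z hz =>
    (hgrow s hs z hz).trans_le (by nlinarith [norm_nonneg z])
  rintro x t ht ⟨s₀, y₀⟩ ⟨hs₀, -⟩
  exact continuousWithinAt_costFn b ht x hcont hinward (fun R hR => hLipX R hR 0)
    (fun R hR => hLipT R hR 0) hs₀ y₀

/-- for fixed `x` and `t > 0`, the map `(s, y) ↦ V^s(x, y, t)` is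
continuous on `[0,∞) × ℝ^d`. -/
theorem cost_continuousOn {d : ℕ} (hd : 1 ≤ d)
    (b : ℝ → EuclideanSpace ℝ (Fin d) → EuclideanSpace ℝ (Fin d))
    (hper : ∀ t ≥ (0:ℝ), ∀ x, b (t + 1) x = b t x)
    (hLipX : ∀ R > (0:ℝ), ∀ x : EuclideanSpace ℝ (Fin d), ∃ K ≥ (0:ℝ),
      ∀ t ≥ (0:ℝ), ∀ y₁ ∈ Metric.closedBall x R, ∀ y₂ ∈ Metric.closedBall x R,
        ‖b t y₁ - b t y₂‖ ≤ K * ‖y₁ - y₂‖)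
    (hLipT : ∀ R > (0:ℝ), ∀ x : EuclideanSpace ℝ (Fin d), ∃ κ ≥ (0:ℝ),
      ∀ s ≥ (0:ℝ), ∀ t ≥ (0:ℝ), ∀ y ∈ Metric.closedBall x R,
        ‖b t y - b s y‖ ≤ κ * |t - s|)
    (hgrow : ∃ η > (0:ℝ), ∃ R₀ > (0:ℝ), ∀ t ≥ (0:ℝ),
      ∀ x : EuclideanSpace ℝ (Fin d), R₀ ≤ ‖x‖ → ⟪x, b t x⟫ < -η * ‖x‖) :
    ∀ x : EuclideanSpace ℝ (Fin d), ∀ t > (0:ℝ),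
      ContinuousOn (fun p : ℝ × EuclideanSpace ℝ (Fin d) => costFn b p.1 x p.2 t)
        (Ici (0:ℝ) ×ˢ (univ : Set (EuclideanSpace ℝ (Fin d)))) :=
  cost_continuousOn_general b hLipX hLipT hgrow
end

section
/- For every fixed x ∈ ℝ^d and t > 0, the infimum of the cost over far-away endpoints diverges uniformly in the frozen time parameter: lim_{R → ∞} inf_{s ≥ 0} inf_{y : ‖y‖ ≥ R} V^s(x, y, t) = +∞. -/
open MeasureTheory Set Filter Topology
open scoped RealInnerProductSpace ENNReal

theorem AbsolutelyContinuousOnInterval.of_dist_le_mul {X : Type*} [PseudoMetricSpace X]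
    {f : ℝ → X} {N : ℝ → ℝ} {a b K : ℝ} (hN : AbsolutelyContinuousOnInterval N a b)
    (hf : ∀ u ∈ uIcc a b, ∀ v ∈ uIcc a b, dist (f u) (f v) ≤ K * dist (N u) (N v)) :
    AbsolutelyContinuousOnInterval f a b := by
  refine squeeze_zero' (Eventually.of_forall fun _ => Finset.sum_nonneg fun _ _ => dist_nonneg)
    ?_ (by simpa using Tendsto.const_mul K hN)
  filter_upwards [eventually_inf_principal.2 (Eventually.of_forall fun _ h => h)]
    with e he
  rw [Finset.mul_sum]
  exact Finset.sum_le_sum fun i hi => hf _ (he.1 i hi).1 _ (he.1 i hi).2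

theorem apply_eq_apply_fract {α : Type*} {f : ℝ → α} (hf : ∀ t ≥ 0, f (t + 1) = f t) {s : ℝ}
    (hs : 0 ≤ s) : f s = f (Int.fract s) := by
  have hshift : ∀ n : ℕ, f (Int.fract s + n) = f (Int.fract s) := by
    intro n
    induction n with
    | zero => simp
    | succ n ih => rw [Nat.cast_succ, ← add_assoc, hf _ (by positivity), ih]
  simpa [natCast_floor_eq_intCast_floor hs, Int.fract_add_floor] using hshift ⌊s⌋₊

section

variable {E : Type*} [NormedAddCommGroup E]

theorem exists_forall_norm_le_of_periodic [ProperSpace E] {b : ℝ → E → E} {R κ : ℝ}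
    (hper : ∀ t ≥ 0, ∀ x, b (t + 1) x = b t x) (hb₀ : Continuous (b 0)) (hκ₀ : 0 ≤ κ)
    (hκ : ∀ s ≥ 0, ∀ t ≥ 0, ∀ y ∈ Metric.closedBall (0 : E) R, ‖b t y - b s y‖ ≤ κ * |t - s|) :
    ∃ C, ∀ s ≥ 0, ∀ y ∈ Metric.closedBall (0 : E) R, ‖b s y‖ ≤ C := by
  obtain ⟨C₀, hC₀⟩ := (isCompact_closedBall (0 : E) R).exists_bound_of_continuousOn
    hb₀.continuousOn
  refine ⟨C₀ + κ, fun s hs y hy => ?_⟩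
  have hfract : |Int.fract s - 0| ≤ 1 := by
    rw [sub_zero, abs_of_nonneg (Int.fract_nonneg s)]
    exact (Int.fract_lt_one s).le
  calc ‖b s y‖ = ‖b (Int.fract s) y‖ := by
        rw [apply_eq_apply_fract (fun t ht => funext (hper t ht)) hs]
    _ ≤ ‖b 0 y‖ + ‖b (Int.fract s) y - b 0 y‖ := norm_le_insert' _ _
    _ ≤ C₀ + κ * 1 := by
        gcongr
        · exact hC₀ y hy
        · exact (hκ 0 le_rfl _ (Int.fract_nonneg s) y hy).trans (by gcongr)
    _ = C₀ + κ := by rw [mul_one]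

section

variable [InnerProductSpace ℝ E]

theorem IntervalIntegrable.continuousOn_inner {f F : ℝ → E} {a b : ℝ}
    (hf : IntervalIntegrable f volume a b) (hF : ContinuousOn F (uIcc a b)) :
    IntervalIntegrable (fun u => ⟪F u, f u⟫) volume a b := by
  obtain ⟨M, hM⟩ := isCompact_uIcc.exists_bound_of_continuousOn hF
  rw [intervalIntegrable_iff] at hf ⊢
  refine (hf.norm.const_mul M).mono' ((hF.mono uIoc_subset_uIcc).aestronglyMeasurable
    measurableSet_uIoc |>.inner hf.1) ?_
  refine (ae_restrict_iff' measurableSet_uIoc).2 (Eventually.of_forall fun u hu => ?_)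
  calc ‖⟪F u, f u⟫‖ ≤ ‖F u‖ * ‖f u‖ := norm_inner_le_norm _ _
    _ ≤ M * ‖f u‖ := by gcongr; exact hM u (uIoc_subset_uIcc hu)

theorem norm_add_integral_sq [CompleteSpace E] {f : ℝ → E} {a b : ℝ}
    (hf : IntervalIntegrable f volume a b) (c : E) :
    ‖c + ∫ u in a..b, f u‖ ^ 2 =
      ‖c‖ ^ 2 + ∫ u in a..b, 2 * ⟪c + ∫ v in a..u, f v, f u⟫ := by
  set F : ℝ → E := fun u => c + ∫ v in a..u, f v
  have hfi : ∀ u ∈ uIcc a b, IntervalIntegrable f volume a u := fun u hu =>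
    hf.mono_set (uIcc_subset_uIcc_left hu)
  have hF : ContinuousOn F (uIcc a b) :=
    continuousOn_const.add (intervalIntegral.continuousOn_primitive_interval' hf left_mem_uIcc)
  have hFf : IntervalIntegrable (fun u => 2 * ⟪F u, f u⟫) volume a b :=
    (hf.continuousOn_inner hF).const_mul 2
  obtain ⟨M, hM⟩ := isCompact_uIcc.exists_bound_of_continuousOn hF
  have hM0 : 0 ≤ M := (norm_nonneg _).trans (hM a left_mem_uIcc)
  -- `‖F‖²` is absolutely continuous because `F` moves no faster than the primitive of `‖f‖`.
  have hFac : AbsolutelyContinuousOnInterval (fun u => ‖F u‖ ^ 2) a b := by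
    refine (hf.norm.absolutelyContinuousOnInterval_intervalIntegral left_mem_uIcc).of_dist_le_mul
      (K := 2 * M) fun u hu v hv => ?_
    have hFuv : F u - F v = ∫ w in v..u, f w := by
      simp only [F, add_sub_add_left_eq_sub]
      exact intervalIntegral.integral_interval_sub_left (hfi u hu) (hfi v hv)
    have hNuv : (∫ w in a..u, ‖f w‖) - ∫ w in a..v, ‖f w‖ = ∫ w in v..u, ‖f w‖ :=
      intervalIntegral.integral_interval_sub_left (hfi u hu).norm (hfi v hv).norm
    rw [Real.dist_eq, Real.dist_eq, hNuv]
    calc |‖F u‖ ^ 2 - ‖F v‖ ^ 2| = (‖F u‖ + ‖F v‖) * |‖F u‖ - ‖F v‖| := by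
          rw [sq_sub_sq, abs_mul, abs_of_nonneg (by positivity)]
      _ ≤ (M + M) * ‖F u - F v‖ := by
          gcongr
          · exact hM u hu
          · exact hM v hv
          · exact abs_norm_sub_norm_le _ _
      _ ≤ 2 * M * |∫ w in v..u, ‖f w‖| := by
          rw [hFuv, two_mul]
          gcongr
          exact intervalIntegral.norm_integral_le_abs_integral_norm
  have hIac := hFf.absolutelyContinuousOnInterval_intervalIntegral left_mem_uIcc
  obtain ⟨C, hC⟩ := (hFac.sub hIac).const_of_ae_hasDerivAt_zero (by
    filter_upwards [hf.ae_hasDerivAt_integral, hFf.ae_hasDerivAt_integral] with u hfu hFfu hu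
    simpa [F] using
      (((hfu hu a left_mem_uIcc).const_add c).norm_sq).sub (hFfu hu a left_mem_uIcc))
  have hCa := hC a left_mem_uIcc
  have hCb := hC b right_mem_uIcc
  simp only [Pi.sub_apply, intervalIntegral.integral_same, add_zero, sub_zero, F] at hCa hCb
  linarith

theorem norm_sq_le_of_inner_le [CompleteSpace E] {B : E → E} {D t : ℝ}
    (hB : ∀ z, ⟪z, B z⟫ ≤ D) (ht : 0 < t) {φ g : ℝ → E}
    (hg : IntervalIntegrable g volume 0 t) (hφ : ∀ u ∈ Icc 0 t, φ u = φ 0 + ∫ v in 0..u, g v)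
    (hgB : IntervalIntegrable (fun u => ‖g u - B (φ u)‖ ^ 2) volume 0 t) :
    ‖φ t‖ ^ 2 ≤ 2 * ‖φ 0‖ ^ 2 + 4 * D * t + 4 * t * ∫ u in 0..t, ‖g u - B (φ u)‖ ^ 2 := by
  have hD : 0 ≤ D := by simpa using hB 0
  have hφc : ContinuousOn φ (Icc 0 t) := by
    refine (continuousOn_const.add ?_).congr hφ
    simpa [uIcc_of_le ht.le] using
      intervalIntegral.continuousOn_primitive_interval' hg left_mem_uIcc
  obtain ⟨u, hu, hmax⟩ := isCompact_Icc.exists_isMaxOn (nonempty_Icc.2 ht.le) hφc.norm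
  set M := ‖φ u‖
  set J := ∫ v in 0..t, ‖g v - B (φ v)‖ ^ 2
  have hsub : uIcc 0 u ⊆ Icc 0 t := by rw [uIcc_of_le hu.1]; exact Icc_subset_Icc_right hu.2
  have hgu : IntervalIntegrable g volume 0 u := hg.mono_set (by rwa [uIcc_of_le ht.le])
  have hgBu : IntervalIntegrable (fun v => ‖g v - B (φ v)‖ ^ 2) volume 0 u :=
    hgB.mono_set (by rwa [uIcc_of_le ht.le])
  have henergy : M ^ 2 = ‖φ 0‖ ^ 2 + ∫ v in 0..u, 2 * ⟪φ v, g v⟫ := by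
    rw [show M = ‖φ 0 + ∫ v in 0..u, g v‖ from congrArg norm (hφ u hu), norm_add_integral_sq hgu]
    congr 1
    refine intervalIntegral.integral_congr fun v hv => ?_
    simp only [hφ v (hsub hv)]
  have hpt : ∀ v ∈ Icc 0 t,
      2 * ⟪φ v, g v⟫ ≤ (M ^ 2 / (2 * t) + 2 * D) + 2 * t * ‖g v - B (φ v)‖ ^ 2 := by
    intro v hv
    have hsplit : ⟪φ v, g v⟫ = ⟪φ v, g v - B (φ v)⟫ + ⟪φ v, B (φ v)⟫ := by
      rw [inner_sub_right]; ring
    have hφv : ‖φ v‖ ≤ M := hmax hv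
    have hcs := real_inner_le_norm (φ v) (g v - B (φ v))
    have hBφ := hB (φ v)
    have hamgm : 2 * M * ‖g v - B (φ v)‖ ≤ M ^ 2 / (2 * t) + 2 * t * ‖g v - B (φ v)‖ ^ 2 := by
      rw [div_add' _ _ _ (by positivity), le_div_iff₀ (by positivity)]
      nlinarith [sq_nonneg (M - 2 * t * ‖g v - B (φ v)‖)]
    have hφg : ‖φ v‖ * ‖g v - B (φ v)‖ ≤ M * ‖g v - B (φ v)‖ := by gcongr
    linarith
  have hint : ∫ v in 0..u, 2 * ⟪φ v, g v⟫ ≤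
      u * (M ^ 2 / (2 * t) + 2 * D) + 2 * t * ∫ v in 0..u, ‖g v - B (φ v)‖ ^ 2 := by
    calc ∫ v in 0..u, 2 * ⟪φ v, g v⟫
        ≤ ∫ v in 0..u, (M ^ 2 / (2 * t) + 2 * D) + 2 * t * ‖g v - B (φ v)‖ ^ 2 :=
          intervalIntegral.integral_mono_on hu.1
            ((hgu.continuousOn_inner (hφc.mono hsub)).const_mul 2)
            (intervalIntegrable_const.add (hgBu.const_mul _))
            fun v hv => hpt v (Icc_subset_Icc_right hu.2 hv)
      _ = _ := by
          rw [intervalIntegral.integral_add intervalIntegrable_const (hgBu.const_mul _),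
            intervalIntegral.integral_const, intervalIntegral.integral_const_mul, smul_eq_mul,
            sub_zero]
  have hJ : ∫ v in 0..u, ‖g v - B (φ v)‖ ^ 2 ≤ J :=
    intervalIntegral.integral_mono_interval le_rfl hu.1 hu.2
      (Eventually.of_forall fun _ => sq_nonneg _) hgB
  have htc : u * (M ^ 2 / (2 * t) + 2 * D) ≤ M ^ 2 / 2 + 2 * D * t := by
    calc u * (M ^ 2 / (2 * t) + 2 * D) ≤ t * (M ^ 2 / (2 * t) + 2 * D) := by
          gcongr; exact hu.2
      _ = M ^ 2 / 2 + 2 * D * t := by field_simp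
  have hφt : ‖φ t‖ ^ 2 ≤ M ^ 2 := by gcongr; exact hmax (right_mem_Icc.2 ht.le)
  nlinarith

theorem inner_le_mul_of_norm_le {B : E → E} {R C : ℝ} (hR : 0 ≤ R)
    (hC : ∀ z, ‖z‖ ≤ R → ‖B z‖ ≤ C) (hout : ∀ z, R ≤ ‖z‖ → ⟪z, B z⟫ ≤ 0) (z : E) :
    ⟪z, B z⟫ ≤ R * C := by
  have hC₀ : 0 ≤ C := (norm_nonneg _).trans (hC 0 (by simpa using hR))
  rcases le_total R ‖z‖ with hz | hz
  · exact (hout z hz).trans (by positivity)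
  · calc ⟪z, B z⟫ ≤ ‖z‖ * ‖B z‖ := real_inner_le_norm _ _
      _ ≤ R * C := by gcongr; exact hC z hz

end

end

section

variable {d : ℕ} {b : ℝ → EuclideanSpace ℝ (Fin d) → EuclideanSpace ℝ (Fin d)}

theorem ofReal_le_frozenRate {s D t : ℝ} (hb : Continuous (b s)) (hD : ∀ z, ⟪z, b s z⟫ ≤ D)
    (ht : 0 < t) {φ : ℝ → EuclideanSpace ℝ (Fin d)} (hφ : ContinuousOn φ (Icc 0 t)) :
    ENNReal.ofReal ((‖φ t‖ ^ 2 - 2 * ‖φ 0‖ ^ 2 - 4 * D * t) / (8 * t)) ≤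
      frozenRate b s t φ := by
  refine le_iInf₂ fun g ⟨hg, hrep⟩ => ?_
  have hbφc := hb.comp_continuousOn hφ
  obtain ⟨C, hC⟩ := isCompact_Icc.exists_bound_of_continuousOn hbφc
  have hbφ : MemLp (fun u => b s (φ u)) 2 (volume.restrict (Ioc 0 t)) :=
    .of_bound ((hbφc.mono Ioc_subset_Icc_self).aestronglyMeasurable measurableSet_Ioc) C
      ((ae_restrict_iff' measurableSet_Ioc).2 (Eventually.of_forall fun u hu =>
        hC u (Ioc_subset_Icc_self hu)))
  have hint : Integrable (fun u => ‖g u - b s (φ u)‖ ^ 2) (volume.restrict (Ioc 0 t)) :=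
    (hg.sub hbφ).integrable_norm_pow two_ne_zero
  have hbound := norm_sq_le_of_inner_le hD ht
    ((intervalIntegrable_iff_integrableOn_Ioc_of_le ht.le).2 (hg.integrable one_le_two)) hrep
    ((intervalIntegrable_iff_integrableOn_Ioc_of_le ht.le).2 hint)
  rw [← ofReal_integral_eq_lintegral_ofReal (hint.const_mul _)
    (Eventually.of_forall fun _ => by positivity), integral_const_mul,
    ← intervalIntegral.integral_of_le ht.le]
  gcongr
  rw [div_le_iff₀ (by positivity)]
  linarith

theorem ofReal_le_costFn {s D t : ℝ} (hb : Continuous (b s)) (hD : ∀ z, ⟪z, b s z⟫ ≤ D)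
    (ht : 0 < t) (x y : EuclideanSpace ℝ (Fin d)) :
    ENNReal.ofReal ((‖y‖ ^ 2 - 2 * ‖x‖ ^ 2 - 4 * D * t) / (8 * t)) ≤ costFn b s x y t :=
  le_iInf₂ fun _ ⟨hφ, hφ0, hφt⟩ => hφ0 ▸ hφt ▸ ofReal_le_frozenRate hb hD ht hφ

end

theorem cost_tendsto_top_general {d : ℕ}
    (b : ℝ → EuclideanSpace ℝ (Fin d) → EuclideanSpace ℝ (Fin d))
    (hper : ∀ t ≥ (0:ℝ), ∀ x, b (t + 1) x = b t x)
    (hLipX : ∀ R > (0:ℝ), ∀ x : EuclideanSpace ℝ (Fin d), ∃ K ≥ (0:ℝ),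
      ∀ t ≥ (0:ℝ), ∀ y₁ ∈ Metric.closedBall x R, ∀ y₂ ∈ Metric.closedBall x R,
        ‖b t y₁ - b t y₂‖ ≤ K * ‖y₁ - y₂‖)
    (hLipT : ∀ R > (0:ℝ), ∀ x : EuclideanSpace ℝ (Fin d), ∃ κ ≥ (0:ℝ),
      ∀ s ≥ (0:ℝ), ∀ t ≥ (0:ℝ), ∀ y ∈ Metric.closedBall x R,
        ‖b t y - b s y‖ ≤ κ * |t - s|)
    (hgrow : ∃ η > (0:ℝ), ∃ R₀ > (0:ℝ), ∀ t ≥ (0:ℝ),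
      ∀ x : EuclideanSpace ℝ (Fin d), R₀ ≤ ‖x‖ → ⟪x, b t x⟫ < -η * ‖x‖) :
    ∀ x : EuclideanSpace ℝ (Fin d), ∀ t > (0:ℝ),
      Tendsto (fun R : ℝ => ⨅ s ∈ Ici (0:ℝ),
          ⨅ y ∈ {y : EuclideanSpace ℝ (Fin d) | R ≤ ‖y‖}, costFn b s x y t)
        atTop (𝓝 (⊤ : ℝ≥0∞)) := by
  obtain ⟨η, hη, R₀, hR₀, hgrow⟩ := hgrow
  have hb : ∀ s ≥ 0, Continuous (b s) := fun s hs => LocallyLipschitz.continuous fun z => by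
    obtain ⟨K, -, hK⟩ := hLipX 1 one_pos z
    exact ⟨_, _, Metric.closedBall_mem_nhds z one_pos, .of_dist_le' fun y₁ h₁ y₂ h₂ => by
      simpa only [dist_eq_norm] using hK s hs y₁ h₁ y₂ h₂⟩
  obtain ⟨κ, hκ₀, hκ⟩ := hLipT R₀ hR₀ 0
  obtain ⟨C, hC⟩ := exists_forall_norm_le_of_periodic hper (hb 0 le_rfl) hκ₀ hκ
  have hD : ∀ s ≥ 0, ∀ z, ⟪z, b s z⟫ ≤ R₀ * C := fun s hs =>
    inner_le_mul_of_norm_le hR₀.le (fun z hz => hC s hs z (mem_closedBall_zero_iff.2 hz))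
      fun z hz => (hgrow s hs z hz).le.trans (by nlinarith [norm_nonneg z])
  intro x t ht
  have hlower : Tendsto (fun R : ℝ => (R ^ 2 - 2 * ‖x‖ ^ 2 - 4 * (R₀ * C) * t) / (8 * t))
      atTop atTop :=
    ((tendsto_atTop_add_const_right _ (-(2 * ‖x‖ ^ 2 + 4 * (R₀ * C) * t))
      (tendsto_pow_atTop two_ne_zero)).congr fun R => by ring).atTop_div_const (by positivity)
  refine tendsto_nhds_top_mono (ENNReal.tendsto_ofReal_atTop.comp hlower) ?_
  filter_upwards [eventually_ge_atTop 0] with R hR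
  refine le_iInf₂ fun s hs => le_iInf₂ fun y hy => ?_
  refine (ENNReal.ofReal_le_ofReal ?_).trans (ofReal_le_costFn (hb s hs) (hD s hs) ht x y)
  exact div_le_div_of_nonneg_right (by linarith [pow_le_pow_left₀ hR hy 2]) (by positivity)

/-- for fixed `x` and `t > 0`,
`lim_{R → ∞} inf_{s ≥ 0} inf_{y : ‖y‖ ≥ R} V^s(x, y, t) = +∞`. -/
theorem cost_tendsto_top {d : ℕ} (hd : 1 ≤ d)
    (b : ℝ → EuclideanSpace ℝ (Fin d) → EuclideanSpace ℝ (Fin d))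
    (hper : ∀ t ≥ (0:ℝ), ∀ x, b (t + 1) x = b t x)
    (hLipX : ∀ R > (0:ℝ), ∀ x : EuclideanSpace ℝ (Fin d), ∃ K ≥ (0:ℝ),
      ∀ t ≥ (0:ℝ), ∀ y₁ ∈ Metric.closedBall x R, ∀ y₂ ∈ Metric.closedBall x R,
        ‖b t y₁ - b t y₂‖ ≤ K * ‖y₁ - y₂‖)
    (hLipT : ∀ R > (0:ℝ), ∀ x : EuclideanSpace ℝ (Fin d), ∃ κ ≥ (0:ℝ),
      ∀ s ≥ (0:ℝ), ∀ t ≥ (0:ℝ), ∀ y ∈ Metric.closedBall x R,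
        ‖b t y - b s y‖ ≤ κ * |t - s|)
    (hgrow : ∃ η > (0:ℝ), ∃ R₀ > (0:ℝ), ∀ t ≥ (0:ℝ),
      ∀ x : EuclideanSpace ℝ (Fin d), R₀ ≤ ‖x‖ → ⟪x, b t x⟫ < -η * ‖x‖) :
    ∀ x : EuclideanSpace ℝ (Fin d), ∀ t > (0:ℝ),
      Tendsto (fun R : ℝ => ⨅ s ∈ Ici (0:ℝ),
          ⨅ y ∈ {y : EuclideanSpace ℝ (Fin d) | R ≤ ‖y‖}, costFn b s x y t)
        atTop (𝓝 (⊤ : ℝ≥0∞)) :=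
  cost_tendsto_top_general b hper hLipX hLipT hgrow
end

section
/- For any compact subset K of ℝ^d there exists a constant Γ_K ≥ 0 such that sup_{s ≥ 0} V^s(x, y) ≤ Γ_K ‖x − y‖ for all x, y ∈ K; i.e. the quasi-potential is locally Lipschitz in the state variables, uniformly with respect to the frozen time parameter s. -/
open MeasureTheory Set Filter Topology
open scoped RealInnerProductSpace ENNReal

/-- The quasi-potential `V^s(x,y) = inf_{t>0} V^s(x,y,t)`. -/
noncomputable def quasipotential {d : ℕ}
    (b : ℝ → EuclideanSpace ℝ (Fin d) → EuclideanSpace ℝ (Fin d))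
    (s : ℝ) (x y : EuclideanSpace ℝ (Fin d)) : ℝ≥0∞ :=
  ⨅ t ∈ Ioi (0:ℝ), costFn b s x y t

/-!
Join `x` to `y` by the straight line traversed in time `T`. Its velocity has norm `‖y - x‖ / T`,
and along the segment the drift is bounded by some `M` independent of `s`, by periodicity and the
local Lipschitz bounds. Hence `V^s(x, y) ≤ (1/2) (‖y - x‖ / T + M)² T`, which is at most
`(1/2) (1 + M)² T` once `T ≥ ‖x - y‖`; letting `T ↓ ‖x - y‖` gives `Γ_K = (1/2) (1 + M)²`.
-/

section Periodic

variable {α β : Type*} {b : ℝ → α → β}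

theorem apply_add_natCast_of_periodic (hper : ∀ t ≥ (0:ℝ), ∀ x, b (t + 1) x = b t x)
    (n : ℕ) {t : ℝ} (ht : 0 ≤ t) (x : α) : b (t + n) x = b t x := by
  induction n with
  | zero => simp
  | succ n ih =>
    rw [Nat.cast_succ, ← add_assoc, hper _ (by positivity), ih]

theorem apply_eq_apply_fract_of_periodic (hper : ∀ t ≥ (0:ℝ), ∀ x, b (t + 1) x = b t x)
    {s : ℝ} (hs : 0 ≤ s) (x : α) : b s x = b (Int.fract s) x := by
  conv_lhs => rw [← Int.fract_add_floor s, ← Int.natCast_floor_eq_floor hs, Int.cast_natCast]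
  exact apply_add_natCast_of_periodic hper _ (Int.fract_nonneg s) x

end Periodic

theorem norm_apply_le_of_periodic {E F : Type*} [SeminormedAddCommGroup E]
    [SeminormedAddCommGroup F] {b : ℝ → E → F} (hper : ∀ t ≥ (0:ℝ), ∀ x, b (t + 1) x = b t x)
    {x₀ : E} {R K κ : ℝ} (hK₀ : 0 ≤ K) (hκ₀ : 0 ≤ κ)
    (hK : ∀ t ≥ (0:ℝ), ∀ y ∈ Metric.closedBall x₀ R, ‖b t y - b t x₀‖ ≤ K * ‖y - x₀‖)
    (hκ : ∀ t ≥ (0:ℝ), ‖b t x₀ - b 0 x₀‖ ≤ κ * |t|)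
    {s : ℝ} (hs : 0 ≤ s) {z : E} (hz : z ∈ Metric.closedBall x₀ R) :
    ‖b s z‖ ≤ ‖b 0 x₀‖ + κ + K * R := by
  set t := Int.fract s
  have ht₀ : 0 ≤ t := Int.fract_nonneg s
  have hspace : ‖b t z - b t x₀‖ ≤ K * R :=
    (hK t ht₀ z hz).trans (mul_le_mul_of_nonneg_left (mem_closedBall_iff_norm.1 hz) hK₀)
  have htime : ‖b t x₀ - b 0 x₀‖ ≤ κ := by
    refine (hκ t ht₀).trans (mul_le_of_le_one_right hκ₀ ?_)
    rw [abs_of_nonneg ht₀]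
    exact (Int.fract_lt_one s).le
  calc ‖b s z‖ = ‖b 0 x₀ + (b t x₀ - b 0 x₀) + (b t z - b t x₀)‖ := by
        rw [apply_eq_apply_fract_of_periodic hper hs]; congr 1; abel
    _ ≤ ‖b 0 x₀‖ + ‖b t x₀ - b 0 x₀‖ + ‖b t z - b t x₀‖ := norm_add₃_le
    _ ≤ ‖b 0 x₀‖ + κ + K * R := by gcongr

section Quasipotential

variable {d : ℕ} {b : ℝ → EuclideanSpace ℝ (Fin d) → EuclideanSpace ℝ (Fin d)} {s : ℝ}

theorem frozenRate_le_of_norm_sub_le {T C : ℝ} {φ g : ℝ → EuclideanSpace ℝ (Fin d)}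
    (hg : MemLp g 2 (volume.restrict (Ioc 0 T)))
    (hφ : ∀ t ∈ Icc 0 T, φ t = φ 0 + ∫ u in (0:ℝ)..t, g u)
    (hC : ∀ t ∈ Ioc 0 T, ‖g t - b s (φ t)‖ ≤ C) :
    frozenRate b s T φ ≤ ENNReal.ofReal ((1/2) * C ^ 2 * T) := calc
  frozenRate b s T φ ≤ ∫⁻ t in Ioc 0 T, ENNReal.ofReal ((1/2) * ‖g t - b s (φ t)‖ ^ 2) :=
    iInf₂_le g ⟨hg, hφ⟩
  _ ≤ ∫⁻ _ in Ioc 0 T, ENNReal.ofReal ((1/2) * C ^ 2) := by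
    refine setLIntegral_mono measurable_const fun t ht => ENNReal.ofReal_le_ofReal ?_
    gcongr
    exact hC t ht
  _ = ENNReal.ofReal ((1/2) * C ^ 2 * T) := by
    rw [setLIntegral_const, Real.volume_Ioc, sub_zero, ← ENNReal.ofReal_mul (by positivity)]

theorem quasipotential_le_of_norm_le_on_segment {x y : EuclideanSpace ℝ (Fin d)} {M T : ℝ}
    (hM : ∀ z ∈ segment ℝ x y, ‖b s z‖ ≤ M) (hT : 0 < T) :
    quasipotential b s x y ≤ ENNReal.ofReal ((1/2) * (‖y - x‖ / T + M) ^ 2 * T) := by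
  set φ : ℝ → EuclideanSpace ℝ (Fin d) := fun t => AffineMap.lineMap x y (t / T)
  have hφ : ∀ t, φ t = x + t • T⁻¹ • (y - x) := fun t => by
    simp only [φ, AffineMap.lineMap_apply, vsub_eq_sub, vadd_eq_add, smul_smul, div_eq_mul_inv]
    abel
  have hpath : ContinuousOn φ (Icc 0 T) ∧ φ 0 = x ∧ φ T = y :=
    ⟨by fun_prop, by simp [φ], by simp [φ, div_self hT.ne']⟩
  have : IsFiniteMeasure (volume.restrict (Ioc (0:ℝ) T)) := isFiniteMeasure_restrict.2 (by simp)
  have hvelocity : ∀ t ∈ Icc 0 T, φ t = φ 0 + ∫ _ in (0:ℝ)..t, T⁻¹ • (y - x) := fun t _ => by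
    simp only [hφ, zero_smul, add_zero, intervalIntegral.integral_const, sub_zero]
  have hrate : frozenRate b s T φ ≤ ENNReal.ofReal ((1/2) * (‖y - x‖ / T + M) ^ 2 * T) := by
    refine frozenRate_le_of_norm_sub_le (memLp_const _) hvelocity fun t ht => ?_
    have hseg : φ t ∈ segment ℝ x y := by
      rw [segment_eq_image_lineMap]
      exact mem_image_of_mem _ ⟨div_nonneg ht.1.le hT.le, (div_le_one hT).2 ht.2⟩
    calc ‖T⁻¹ • (y - x) - b s (φ t)‖ ≤ ‖T⁻¹ • (y - x)‖ + ‖b s (φ t)‖ := norm_sub_le _ _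
      _ ≤ ‖y - x‖ / T + M := by
        rw [norm_smul, norm_inv, Real.norm_of_nonneg hT.le, inv_mul_eq_div]
        gcongr
        exact hM _ hseg
  exact (iInf₂_le T hT).trans ((iInf₂_le φ hpath).trans hrate)

theorem quasipotential_le_mul_norm_sub {x y : EuclideanSpace ℝ (Fin d)} {M : ℝ} (hM₀ : 0 ≤ M)
    (hM : ∀ z ∈ segment ℝ x y, ‖b s z‖ ≤ M) :
    quasipotential b s x y ≤ ENNReal.ofReal ((1/2) * (1 + M) ^ 2 * ‖x - y‖) := by
  have hlim : Tendsto (fun T => ENNReal.ofReal ((1/2) * (1 + M) ^ 2 * T)) (𝓝[>] ‖x - y‖)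
      (𝓝 (ENNReal.ofReal ((1/2) * (1 + M) ^ 2 * ‖x - y‖))) :=
    ((ENNReal.continuous_ofReal.comp (continuous_const.mul continuous_id)).tendsto _).mono_left
      nhdsWithin_le_nhds
  refine ge_of_tendsto hlim (eventually_nhdsWithin_of_forall fun T (hT : ‖x - y‖ < T) => ?_)
  have hT₀ : 0 < T := (norm_nonneg _).trans_lt hT
  have hspeed : ‖y - x‖ / T ≤ 1 := by
    rw [norm_sub_rev, div_le_one hT₀]
    exact hT.le
  refine (quasipotential_le_of_norm_le_on_segment hM hT₀).trans (ENNReal.ofReal_le_ofReal ?_)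
  gcongr

end Quasipotential

theorem quasipotential_locally_lipschitz_general {d : ℕ}
    (b : ℝ → EuclideanSpace ℝ (Fin d) → EuclideanSpace ℝ (Fin d))
    (hper : ∀ t ≥ (0:ℝ), ∀ x, b (t + 1) x = b t x)
    (hLipX : ∀ R > (0:ℝ), ∀ x : EuclideanSpace ℝ (Fin d), ∃ K ≥ (0:ℝ),
      ∀ t ≥ (0:ℝ), ∀ y₁ ∈ Metric.closedBall x R, ∀ y₂ ∈ Metric.closedBall x R,
        ‖b t y₁ - b t y₂‖ ≤ K * ‖y₁ - y₂‖)
    (hLipT : ∀ R > (0:ℝ), ∀ x : EuclideanSpace ℝ (Fin d), ∃ κ ≥ (0:ℝ),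
      ∀ s ≥ (0:ℝ), ∀ t ≥ (0:ℝ), ∀ y ∈ Metric.closedBall x R,
        ‖b t y - b s y‖ ≤ κ * |t - s|) :
    ∀ K : Set (EuclideanSpace ℝ (Fin d)), IsCompact K →
      ∃ Γ ≥ (0:ℝ), ∀ x ∈ K, ∀ y ∈ K, ∀ s ≥ (0:ℝ),
        quasipotential b s x y ≤ ENNReal.ofReal (Γ * ‖x - y‖) := by
  intro K hK
  obtain ⟨r, hKr⟩ := hK.isBounded.subset_closedBall 0
  set R := max r 1
  have hR : 0 < R := lt_max_of_lt_right one_pos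
  have hKR : K ⊆ Metric.closedBall 0 R :=
    hKr.trans (Metric.closedBall_subset_closedBall le_sup_left)
  obtain ⟨L, hL₀, hL⟩ := hLipX R hR 0
  obtain ⟨κ, hκ₀, hκ⟩ := hLipT R hR 0
  have hcenter := Metric.mem_closedBall_self (x := (0 : EuclideanSpace ℝ (Fin d))) hR.le
  set M := ‖b 0 0‖ + κ + L * R
  have hbound : ∀ s ≥ (0:ℝ), ∀ z ∈ Metric.closedBall 0 R, ‖b s z‖ ≤ M :=
    fun s hs z hz => norm_apply_le_of_periodic hper hL₀ hκ₀
      (fun t ht y hy => hL t ht y hy 0 hcenter)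
      (fun t ht => by simpa using hκ 0 le_rfl t ht 0 hcenter) hs hz
  have hM₀ : 0 ≤ M := by positivity
  refine ⟨(1/2) * (1 + M) ^ 2, by positivity, fun x hx y hy s hs => ?_⟩
  exact quasipotential_le_mul_norm_sub hM₀ fun z hz =>
    hbound s hs z ((convex_closedBall 0 R).segment_subset (hKR hx) (hKR hy) hz)

/-- Lemma 1.7: for any compact `K ⊆ ℝ^d` there is `Γ_K ≥ 0` with
`sup_{s ≥ 0} V^s(x, y) ≤ Γ_K ‖x − y‖` for all `x, y ∈ K`. -/
theorem quasipotential_locally_lipschitz {d : ℕ} (hd : 1 ≤ d)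
    (b : ℝ → EuclideanSpace ℝ (Fin d) → EuclideanSpace ℝ (Fin d))
    (hper : ∀ t ≥ (0:ℝ), ∀ x, b (t + 1) x = b t x)
    (hLipX : ∀ R > (0:ℝ), ∀ x : EuclideanSpace ℝ (Fin d), ∃ K ≥ (0:ℝ),
      ∀ t ≥ (0:ℝ), ∀ y₁ ∈ Metric.closedBall x R, ∀ y₂ ∈ Metric.closedBall x R,
        ‖b t y₁ - b t y₂‖ ≤ K * ‖y₁ - y₂‖)
    (hLipT : ∀ R > (0:ℝ), ∀ x : EuclideanSpace ℝ (Fin d), ∃ κ ≥ (0:ℝ),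
      ∀ s ≥ (0:ℝ), ∀ t ≥ (0:ℝ), ∀ y ∈ Metric.closedBall x R,
        ‖b t y - b s y‖ ≤ κ * |t - s|)
    (hgrow : ∃ η > (0:ℝ), ∃ R₀ > (0:ℝ), ∀ t ≥ (0:ℝ),
      ∀ x : EuclideanSpace ℝ (Fin d), R₀ ≤ ‖x‖ → ⟪x, b t x⟫ < -η * ‖x‖) :
    ∀ K : Set (EuclideanSpace ℝ (Fin d)), IsCompact K →
      ∃ Γ ≥ (0:ℝ), ∀ x ∈ K, ∀ y ∈ K, ∀ s ≥ (0:ℝ),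
        quasipotential b s x y ≤ ENNReal.ofReal (Γ * ‖x - y‖) :=
  quasipotential_locally_lipschitz_general b hper hLipX hLipT
end

section
/- (Lemma 2.7) Let K be a compact subset of A_− \ {x_−}. There exist T₀ > 0 and c > 0 such that for all T ≥ T₀, all s ∈ [0,1], and every continuous path φ ∈ C([0,T],ℝ^d) taking all of its values in K, one has I^s_{0T}(φ) ≥ c(T − T₀). -/
open MeasureTheory Set Filter Topology
open scoped RealInnerProductSpace ENNReal

/-!
If the claim failed, there would be frozen times `sₙ ∈ [0,1]` and paths confined to `K` on windows
of length `n + 1` whose action is below `1/(n+1)`. By Cauchy–Schwarz the action controls the defect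
`ψ t' - ψ t - (t' - t) • b s (ψ t)`, so pointwise limits along an ultrafilter (which exist since
`K` is compact) give a solution of `φ' = b s φ` on `[0, ∞)` that never leaves `K`. It starts in
`A_−`, hence converges to `x_−`, which would then lie in the closed set `K`. So some window length
`τ` forces action at least `ε` on every window spent in `K`, and a path confined to `K` for time `T`
contains `⌊T/τ⌋` disjoint such windows.
-/

open scoped NNReal

theorem exists_lipschitzOnWith_and_continuousOn_uncurry {E : Type*} [NormedAddCommGroup E]
    {b : ℝ → E → E}
    (hLipX : ∀ R > (0:ℝ), ∀ x : E, ∃ K ≥ (0:ℝ),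
      ∀ t ≥ (0:ℝ), ∀ y₁ ∈ Metric.closedBall x R, ∀ y₂ ∈ Metric.closedBall x R,
        ‖b t y₁ - b t y₂‖ ≤ K * ‖y₁ - y₂‖)
    (hLipT : ∀ R > (0:ℝ), ∀ x : E, ∃ κ ≥ (0:ℝ),
      ∀ s ≥ (0:ℝ), ∀ t ≥ (0:ℝ), ∀ y ∈ Metric.closedBall x R,
        ‖b t y - b s y‖ ≤ κ * |t - s|)
    {K : Set E} (hK : Bornology.IsBounded K) :
    ∃ L : ℝ≥0, (∀ s ∈ Ici (0 : ℝ), LipschitzOnWith L (b s) K) ∧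
      ContinuousOn (Function.uncurry b) (Ici 0 ×ˢ K) := by
  obtain ⟨R, hR, hKR⟩ := hK.subset_closedBall_lt 0 0
  obtain ⟨L, -, hL⟩ := hLipX R hR 0
  obtain ⟨κ, -, hκ⟩ := hLipT R hR 0
  have hbL : ∀ s ∈ Ici (0 : ℝ), LipschitzOnWith L.toNNReal (b s) K := fun s hs =>
    LipschitzOnWith.of_dist_le' fun y hy z hz => by
      simpa only [dist_eq_norm] using hL s hs y (hKR hy) z (hKR hz)
  refine ⟨L.toNNReal, hbL,
    continuousOn_prod_of_continuousOn_lipschitzOnWith' _ _ hbL fun y hy => ?_⟩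
  exact (LipschitzOnWith.of_dist_le' (K := κ) fun t ht s hs => by
    simpa only [dist_eq_norm, Function.uncurry_apply_pair, Real.norm_eq_abs] using
      hκ s hs t ht y (hKR hy)).continuousOn

section

variable {E : Type*} [NormedAddCommGroup E] [NormedSpace ℝ E]

theorem norm_intervalIntegral_le_sqrt_of_lintegral_le {h : ℝ → E} {a c δ : ℝ} (hac : a ≤ c)
    (hδ₀ : 0 ≤ δ) (hh : AEStronglyMeasurable h (volume.restrict (Ioc a c)))
    (hδ : ∫⁻ u in Ioc a c, ENNReal.ofReal (1 / 2 * ‖h u‖ ^ 2) ≤ ENNReal.ofReal δ) :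
    ‖∫ u in a..c, h u‖ ≤ √(2 * δ * (c - a)) := by
  have hsq : ∫⁻ u in Ioc a c, ‖h u‖ₑ ^ (2 : ℝ) ≤ ENNReal.ofReal (2 * δ) := by
    calc ∫⁻ u in Ioc a c, ‖h u‖ₑ ^ (2 : ℝ)
        = ∫⁻ u in Ioc a c, ENNReal.ofReal 2 * ENNReal.ofReal (1 / 2 * ‖h u‖ ^ 2) := by
          refine lintegral_congr fun u => ?_
          rw [← ENNReal.ofReal_mul zero_le_two, ← ofReal_norm,
            ENNReal.ofReal_rpow_of_nonneg (norm_nonneg _) zero_le_two]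
          congr 1
          norm_cast
          ring
      _ ≤ ENNReal.ofReal (2 * δ) := by
          rw [lintegral_const_mul' _ _ ENNReal.ofReal_ne_top, ENNReal.ofReal_mul zero_le_two]
          gcongr
  have hCS := eLpNorm_le_eLpNorm_mul_rpow_measure_univ one_le_two hh
  rw [eLpNorm_one_eq_lintegral_enorm,
    eLpNorm_eq_lintegral_rpow_enorm_toReal two_ne_zero ENNReal.ofNat_ne_top,
    Measure.restrict_apply_univ, Real.volume_Ioc] at hCS
  simp only [ENNReal.toReal_ofNat, ENNReal.toReal_one, show (1 : ℝ) / 1 - 1 / 2 = 1 / 2 by norm_num]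
    at hCS
  rw [← ENNReal.ofReal_le_ofReal_iff (Real.sqrt_nonneg _), ofReal_norm,
    intervalIntegral.integral_of_le hac, Real.sqrt_eq_rpow,
    ← ENNReal.ofReal_rpow_of_nonneg (by nlinarith) one_half_pos.le,
    ENNReal.ofReal_mul' (by linarith), ENNReal.mul_rpow_of_nonneg _ _ one_half_pos.le]
  calc ‖∫ u in Ioc a c, h u‖ₑ ≤ ∫⁻ u in Ioc a c, ‖h u‖ₑ := enorm_integral_le_lintegral_enorm _
    _ ≤ _ := hCS
    _ ≤ _ := by gcongr

-- `g` stands for the derivative of `ψ`: `frozenRate b s T φ` is the infimum of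
-- `pathAction (b s) g φ 0 T` over the `L²` densities `g` of `φ`.
noncomputable def pathAction (V : E → E) (g ψ : ℝ → E) (a c : ℝ) : ℝ≥0∞ :=
  ∫⁻ t in Ioc a c, ENNReal.ofReal (1 / 2 * ‖g t - V (ψ t)‖ ^ 2)

section NearSolution

variable {V : E → E} {S : Set E} {L : ℝ≥0} {M δ a c : ℝ} {ψ g : ℝ → E}

theorem sub_eq_intervalIntegral_of_eq_add_integral (hg : IntervalIntegrable g volume a c)
    (hψ : ∀ t ∈ Icc a c, ψ t = ψ a + ∫ u in a..t, g u) {t t' : ℝ} (ht : t ∈ Icc a c)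
    (ht' : t' ∈ Icc a c) : ψ t' - ψ t = ∫ u in t..t', g u := by
  have hac : a ≤ c := ht.1.trans ht.2
  rw [hψ t' ht', hψ t ht, add_sub_add_left_eq_sub, intervalIntegral.integral_interval_sub_left]
  · exact hg.mono_set (uIcc_subset_uIcc left_mem_uIcc (by rwa [uIcc_of_le hac]))
  · exact hg.mono_set (uIcc_subset_uIcc left_mem_uIcc (by rwa [uIcc_of_le hac]))

theorem continuousOn_of_eq_add_integral (hg : IntervalIntegrable g volume a c)
    (hψ : ∀ t ∈ Icc a c, ψ t = ψ a + ∫ u in a..t, g u) : ContinuousOn ψ (Icc a c) := by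
  rcases le_or_gt a c with hac | hca
  · have := intervalIntegral.continuousOn_primitive_interval' hg left_mem_uIcc
    rw [uIcc_of_le hac] at this
    exact (continuousOn_const.add this).congr hψ
  · simp [Icc_eq_empty_of_lt hca]

theorem intervalIntegrable_comp_of_eq_add_integral (hVL : LipschitzOnWith L V S)
    (hψS : MapsTo ψ (Icc a c) S) (hg : IntervalIntegrable g volume a c)
    (hψ : ∀ t ∈ Icc a c, ψ t = ψ a + ∫ u in a..t, g u) {t t' : ℝ} (ht : a ≤ t) (htt' : t ≤ t')
    (ht' : t' ≤ c) : IntervalIntegrable (fun u => V (ψ u)) volume t t' :=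
  ((hVL.continuousOn.comp (continuousOn_of_eq_add_integral hg hψ) hψS).mono
    (Icc_subset_Icc ht ht')).intervalIntegrable_of_Icc htt'

theorem norm_integral_sub_comp_le_sqrt (hVL : LipschitzOnWith L V S)
    (hψS : MapsTo ψ (Icc a c) S) (hg : IntervalIntegrable g volume a c)
    (hψ : ∀ t ∈ Icc a c, ψ t = ψ a + ∫ u in a..t, g u) (hδ₀ : 0 ≤ δ)
    (hact : pathAction V g ψ a c ≤ ENNReal.ofReal δ) {t t' : ℝ} (ht : a ≤ t) (htt' : t ≤ t')
    (ht' : t' ≤ c) : ‖∫ u in t..t', (g u - V (ψ u))‖ ≤ √(2 * δ * (t' - t)) := by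
  have hgt : IntervalIntegrable g volume t t' :=
    hg.mono_set (by rw [uIcc_of_le htt', uIcc_of_le (ht.trans (htt'.trans ht'))]; gcongr)
  refine norm_intervalIntegral_le_sqrt_of_lintegral_le htt' hδ₀
    (hgt.sub (intervalIntegrable_comp_of_eq_add_integral hVL hψS hg hψ ht htt' ht')).1.1
    ((lintegral_mono_set (Ioc_subset_Ioc ht ht')).trans hact)

theorem norm_sub_le_of_pathAction_le (hVL : LipschitzOnWith L V S) (hVM : ∀ y ∈ S, ‖V y‖ ≤ M)
    (hψS : MapsTo ψ (Icc a c) S) (hg : IntervalIntegrable g volume a c)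
    (hψ : ∀ t ∈ Icc a c, ψ t = ψ a + ∫ u in a..t, g u) (hδ₀ : 0 ≤ δ)
    (hact : pathAction V g ψ a c ≤ ENNReal.ofReal δ) {t t' : ℝ} (ht : a ≤ t) (htt' : t ≤ t')
    (ht' : t' ≤ c) : ‖ψ t' - ψ t‖ ≤ M * (t' - t) + √(2 * δ * (t' - t)) := by
  have hVψ := intervalIntegrable_comp_of_eq_add_integral hVL hψS hg hψ ht htt' ht'
  have hgt : IntervalIntegrable g volume t t' :=
    hg.mono_set (by rw [uIcc_of_le htt', uIcc_of_le (ht.trans (htt'.trans ht'))]; gcongr)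
  have hdrift : ‖∫ u in t..t', V (ψ u)‖ ≤ M * (t' - t) := by
    refine (intervalIntegral.norm_integral_le_of_norm_le_const fun u hu => ?_).trans_eq
      (by rw [abs_of_nonneg (sub_nonneg.2 htt')])
    rw [uIoc_of_le htt'] at hu
    exact hVM _ (hψS ⟨ht.trans hu.1.le, hu.2.trans ht'⟩)
  calc ‖ψ t' - ψ t‖ = ‖(∫ u in t..t', (g u - V (ψ u))) + ∫ u in t..t', V (ψ u)‖ := by
        rw [sub_eq_intervalIntegral_of_eq_add_integral hg hψ ⟨ht, htt'.trans ht'⟩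
          ⟨ht.trans htt', ht'⟩, intervalIntegral.integral_sub hgt hVψ, sub_add_cancel]
    _ ≤ √(2 * δ * (t' - t)) + M * (t' - t) :=
        (norm_add_le _ _).trans (add_le_add
          (norm_integral_sub_comp_le_sqrt hVL hψS hg hψ hδ₀ hact ht htt' ht') hdrift)
    _ = M * (t' - t) + √(2 * δ * (t' - t)) := add_comm _ _

theorem norm_sub_sub_smul_le_of_pathAction_le [CompleteSpace E] (hVL : LipschitzOnWith L V S)
    (hVM : ∀ y ∈ S, ‖V y‖ ≤ M) (hψS : MapsTo ψ (Icc a c) S)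
    (hg : IntervalIntegrable g volume a c) (hψ : ∀ t ∈ Icc a c, ψ t = ψ a + ∫ u in a..t, g u)
    (hδ₀ : 0 ≤ δ) (hact : pathAction V g ψ a c ≤ ENNReal.ofReal δ) {t t' : ℝ} (ht : a ≤ t)
    (htt' : t ≤ t') (ht' : t' ≤ c) :
    ‖ψ t' - ψ t - (t' - t) • V (ψ t)‖ ≤
      L * M * (t' - t) ^ 2 + (1 + L * (t' - t)) * √(2 * δ * (t' - t)) := by
  have hVψ := intervalIntegrable_comp_of_eq_add_integral hVL hψS hg hψ ht htt' ht'
  have hgt : IntervalIntegrable g volume t t' :=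
    hg.mono_set (by rw [uIcc_of_le htt', uIcc_of_le (ht.trans (htt'.trans ht'))]; gcongr)
  have hdrift : ‖∫ u in t..t', (V (ψ u) - V (ψ t))‖ ≤
      L * (M * (t' - t) + √(2 * δ * (t' - t))) * (t' - t) := by
    refine (intervalIntegral.norm_integral_le_of_norm_le_const fun u hu => ?_).trans_eq
      (by rw [abs_of_nonneg (sub_nonneg.2 htt')])
    rw [uIoc_of_le htt'] at hu
    have hu' : u ∈ Icc a c := ⟨ht.trans hu.1.le, hu.2.trans ht'⟩
    calc ‖V (ψ u) - V (ψ t)‖ ≤ L * ‖ψ u - ψ t‖ := by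
          simpa only [dist_eq_norm] using
            hVL.dist_le_mul _ (hψS hu') _ (hψS ⟨ht, htt'.trans ht'⟩)
      _ ≤ L * (M * (u - t) + √(2 * δ * (u - t))) := by
          gcongr
          exact norm_sub_le_of_pathAction_le hVL hVM hψS hg hψ hδ₀ hact ht hu.1.le hu'.2
      _ ≤ L * (M * (t' - t) + √(2 * δ * (t' - t))) := by
          have hM : 0 ≤ M := (norm_nonneg _).trans (hVM _ (hψS ⟨ht, htt'.trans ht'⟩))
          gcongr <;> exact hu.2
  calc ‖ψ t' - ψ t - (t' - t) • V (ψ t)‖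
        = ‖(∫ u in t..t', (g u - V (ψ u))) + ∫ u in t..t', (V (ψ u) - V (ψ t))‖ := by
        rw [sub_eq_intervalIntegral_of_eq_add_integral hg hψ ⟨ht, htt'.trans ht'⟩
          ⟨ht.trans htt', ht'⟩, intervalIntegral.integral_sub hgt hVψ,
          intervalIntegral.integral_sub hVψ intervalIntegrable_const,
          intervalIntegral.integral_const]
        abel_nf
    _ ≤ √(2 * δ * (t' - t)) + L * (M * (t' - t) + √(2 * δ * (t' - t))) * (t' - t) :=
        (norm_add_le _ _).trans (add_le_add
          (norm_integral_sub_comp_le_sqrt hVL hψS hg hψ hδ₀ hact ht htt' ht') hdrift)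
    _ = L * M * (t' - t) ^ 2 + (1 + L * (t' - t)) * √(2 * δ * (t' - t)) := by ring

theorem norm_sub_sub_smul_le_sq_of_ge {C t y : ℝ} (hVL : LipschitzOnWith L V S)
    (hVM : ∀ y ∈ S, ‖V y‖ ≤ M) (hψS : MapsTo ψ (Ici a) S)
    (h : ∀ t y, a ≤ t → t ≤ y → ‖ψ y - ψ t - (y - t) • V (ψ t)‖ ≤ C * (y - t) ^ 2)
    (hy : a ≤ y) (hyt : y ≤ t) (htd : t - y ≤ 1) :
    ‖ψ y - ψ t - (y - t) • V (ψ t)‖ ≤ (C + L * (M + C)) * (y - t) ^ 2 := by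
  have hC : 0 ≤ C := by
    simpa using (norm_nonneg _).trans (h t (t + 1) (hy.trans hyt) (by linarith))
  set d := t - y
  have hd₀ : 0 ≤ d := sub_nonneg.2 hyt
  have hfwd := h y t hy hyt
  have hinc : ‖ψ t - ψ y‖ ≤ M * d + C * d ^ 2 := by
    calc ‖ψ t - ψ y‖ = ‖(ψ t - ψ y - d • V (ψ y)) + d • V (ψ y)‖ := by rw [sub_add_cancel]
      _ ≤ C * d ^ 2 + d * M := by
        refine (norm_add_le _ _).trans (add_le_add hfwd ?_)
        rw [norm_smul, Real.norm_of_nonneg hd₀]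
        exact mul_le_mul_of_nonneg_left (hVM _ (hψS hy)) hd₀
      _ = M * d + C * d ^ 2 := by ring
  have hlip : ‖V (ψ y) - V (ψ t)‖ ≤ L * ‖ψ t - ψ y‖ := by
    simpa only [dist_eq_norm, norm_sub_rev (ψ y)] using
      hVL.dist_le_mul _ (hψS hy) _ (hψS (hy.trans hyt))
  -- the backward error is the forward error from `y` plus the change of the drift
  calc ‖ψ y - ψ t - (y - t) • V (ψ t)‖
      = ‖-(ψ t - ψ y - d • V (ψ y)) - d • (V (ψ y) - V (ψ t))‖ := by congr 1; module
    _ ≤ C * d ^ 2 + d * (L * (M * d + C * d ^ 2)) := by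
        refine (norm_sub_le _ _).trans (add_le_add (by rwa [norm_neg]) ?_)
        rw [norm_smul, Real.norm_of_nonneg hd₀]
        exact mul_le_mul_of_nonneg_left (hlip.trans (by gcongr)) hd₀
    _ ≤ (C + L * (M + C)) * (y - t) ^ 2 := by
        have hM : 0 ≤ M := (norm_nonneg _).trans (hVM _ (hψS hy))
        have hd₃ : C * d ^ 3 ≤ C * d ^ 2 :=
          mul_le_mul_of_nonneg_left (pow_le_pow_of_le_one hd₀ htd (by norm_num)) hC
        rw [show (y - t) ^ 2 = d ^ 2 by ring]
        nlinarith [L.2]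

theorem hasDerivWithinAt_Ici_of_norm_sub_sub_smul_le {C t : ℝ} (hVL : LipschitzOnWith L V S)
    (hVM : ∀ y ∈ S, ‖V y‖ ≤ M) (hψS : MapsTo ψ (Ici a) S)
    (h : ∀ t y, a ≤ t → t ≤ y → ‖ψ y - ψ t - (y - t) • V (ψ t)‖ ≤ C * (y - t) ^ 2)
    (ht : a ≤ t) : HasDerivWithinAt ψ (V (ψ t)) (Ici a) t := by
  have hC : 0 ≤ C := by
    simpa using (norm_nonneg _).trans (h t (t + 1) ht (by linarith))
  have hM : 0 ≤ M := (norm_nonneg _).trans (hVM _ (hψS ht))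
  have hsq : ∀ y ∈ Ici a, |y - t| ≤ 1 →
      ‖ψ y - ψ t - (y - t) • V (ψ t)‖ ≤ (C + L * (M + C)) * (y - t) ^ 2 := by
    intro y hy hyt
    rcases le_total t y with hty | hyt'
    · exact (h t y ht hty).trans (by gcongr; exact le_add_of_nonneg_right (by positivity))
    · rw [abs_sub_comm] at hyt
      exact norm_sub_sub_smul_le_sq_of_ge hVL hVM hψS h hy hyt' ((le_abs_self _).trans hyt)
  rw [hasDerivWithinAt_iff_isLittleO]
  refine Asymptotics.IsBigO.trans_isLittleO (g := fun y => ‖y - t‖ ^ 2) ?_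
    ((Asymptotics.isLittleO_pow_sub_sub t one_lt_two).mono nhdsWithin_le_nhds)
  refine Asymptotics.IsBigO.of_bound (C + L * (M + C)) ?_
  have hnear : ∀ᶠ y in 𝓝[Ici a] t, |y - t| ≤ 1 :=
    nhdsWithin_le_nhds (Metric.eventually_nhds_iff.2 ⟨1, one_pos, fun _ hy => hy.le⟩)
  filter_upwards [hnear, self_mem_nhdsWithin] with y hyt hy
  rw [Real.norm_of_nonneg (sq_nonneg _), Real.norm_eq_abs, sq_abs]
  exact hsq y hy hyt

end NearSolution

theorem exists_mapsTo_solution_of_forall_pathAction_lt {ι : Type*} [TopologicalSpace ι]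
    [CompleteSpace E] {b : ι → E → E} {P : Set ι} {K : Set E} {L : ℝ≥0} (hP : IsCompact P)
    (hK : IsCompact K) (hbc : ContinuousOn (Function.uncurry b) (P ×ˢ K))
    (hbL : ∀ s ∈ P, LipschitzOnWith L (b s) K)
    (h : ∀ τ > 0, ∀ ε > 0, ∃ s ∈ P, ∃ (a : ℝ) (ψ g : ℝ → E),
      IntervalIntegrable g volume a (a + τ) ∧
      (∀ t ∈ Icc a (a + τ), ψ t = ψ a + ∫ u in a..t, g u) ∧ MapsTo ψ (Icc a (a + τ)) K ∧
      pathAction (b s) g ψ a (a + τ) < ENNReal.ofReal ε) :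
    ∃ s ∈ P, ∃ ψ : ℝ → E, MapsTo ψ (Ici 0) K ∧
      ∀ t ∈ Ici (0 : ℝ), HasDerivWithinAt ψ (b s (ψ t)) (Ici 0) t := by
  obtain ⟨M, hM⟩ := (hP.prod hK).exists_bound_of_continuousOn hbc
  choose s hs a ψ g hg hψ hψK hact using fun n : ℕ =>
    h (n + 1) n.cast_add_one_pos (1 / (n + 1)) (by positivity)
  set F := Ultrafilter.of (atTop : Filter ℕ)
  have hF : ∀ t : ℝ, ∀ᶠ n : ℕ in F, t ≤ n + 1 := fun t =>
    Ultrafilter.of_le _ <|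
      (tendsto_natCast_atTop_atTop.atTop_add tendsto_const_nhds).eventually_ge_atTop t
  obtain ⟨s', hs', hss'⟩ :=
    hP.ultrafilter_le_nhds (F.map s) (tendsto_principal.2 (Eventually.of_forall hs))
  choose ψ' hψ'K hψψ' using fun t : ℝ =>
    hK.ultrafilter_le_nhds (F.map fun n => ψ n (a n + max t 0)) <| tendsto_principal.2 <|
      (hF (max t 0)).mono fun n hn => hψK n ⟨le_add_of_nonneg_right (le_max_right t 0), by linarith⟩
  have hlim : ∀ t ≥ (0 : ℝ), Tendsto (fun n => ψ n (a n + t)) F (𝓝 (ψ' t)) := fun t ht => by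
    have := hψψ' t
    rw [max_eq_left ht] at this
    exact this
  have hdrift : ∀ t ≥ (0 : ℝ), Tendsto (fun n => b (s n) (ψ n (a n + t))) F (𝓝 (b s' (ψ' t))) :=
    fun t ht => (hbc (s', ψ' t) ⟨hs', hψ'K t⟩).tendsto.comp <| tendsto_nhdsWithin_iff.2
      ⟨Tendsto.prodMk_nhds hss' (hlim t ht),
        (hF t).mono fun n hn => ⟨hs n, hψK n ⟨le_add_of_nonneg_right ht, by linarith⟩⟩⟩
  have hbound : ∀ t y, 0 ≤ t → t ≤ y →
      ‖ψ' y - ψ' t - (y - t) • b s' (ψ' t)‖ ≤ L * M * (y - t) ^ 2 := by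
    intro t y ht hty
    have hr : Tendsto (fun n : ℕ => √(2 * (1 / ((n : ℝ) + 1)) * (y - t))) F (𝓝 0) := by
      simpa using (((tendsto_one_div_add_atTop_nhds_zero_nat.const_mul 2).mul_const
        (y - t)).sqrt).mono_left (Ultrafilter.of_le _)
    have herr : Tendsto (fun n : ℕ => L * M * (y - t) ^ 2 +
        (1 + L * (y - t)) * √(2 * (1 / ((n : ℝ) + 1)) * (y - t))) F (𝓝 (L * M * (y - t) ^ 2)) := by
      simpa using tendsto_const_nhds.add (hr.const_mul (1 + L * (y - t)))
    refine le_of_tendsto_of_tendsto (((hlim y (ht.trans hty)).sub (hlim t ht)).sub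
      ((hdrift t ht).const_smul (y - t))).norm herr ?_
    filter_upwards [hF y] with n hn
    simpa only [add_sub_add_left_eq_sub] using
      norm_sub_sub_smul_le_of_pathAction_le (hbL _ (hs n)) (fun z hz => hM (s n, z) ⟨hs n, hz⟩)
        (hψK n) (hg n) (hψ n) (by positivity) (hact n).le (t := a n + t) (t' := a n + y)
        (le_add_of_nonneg_right ht) (by linarith) (by linarith)
  exact ⟨s', hs', ψ', fun t _ => hψ'K t, fun t ht =>
    hasDerivWithinAt_Ici_of_norm_sub_sub_smul_le (hbL s' hs') (fun y hy => hM (s', y) ⟨hs', hy⟩)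
      (fun t _ => hψ'K t) hbound ht⟩

theorem exists_pathAction_lower_bound {ι : Type*} [TopologicalSpace ι] [CompleteSpace E]
    {b : ι → E → E} {P : Set ι} {K : Set E} {L : ℝ≥0} (hP : IsCompact P) (hK : IsCompact K)
    (hbc : ContinuousOn (Function.uncurry b) (P ×ˢ K)) (hbL : ∀ s ∈ P, LipschitzOnWith L (b s) K)
    (hsol : ∀ s ∈ P, ∀ ψ : ℝ → E, (∀ t ∈ Ici (0 : ℝ), HasDerivWithinAt ψ (b s (ψ t)) (Ici 0) t) →
      ¬ MapsTo ψ (Ici 0) K) :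
    ∃ τ > 0, ∃ ε > 0, ∀ s ∈ P, ∀ (a : ℝ) (ψ g : ℝ → E),
      IntervalIntegrable g volume a (a + τ) →
      (∀ t ∈ Icc a (a + τ), ψ t = ψ a + ∫ u in a..t, g u) → MapsTo ψ (Icc a (a + τ)) K →
      ENNReal.ofReal ε ≤ pathAction (b s) g ψ a (a + τ) := by
  by_contra! h
  obtain ⟨s, hs, ψ, hψK, hψ⟩ := exists_mapsTo_solution_of_forall_pathAction_lt hP hK hbc hbL h
  exact hsol s hs ψ hψ hψK

theorem ofReal_natCast_mul_le_lintegral_Ioc {f : ℝ → ℝ≥0∞} {τ ε : ℝ} (hτ : 0 ≤ τ) (hε : 0 ≤ ε)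
    (N : ℕ) (h : ∀ k < N, ENNReal.ofReal ε ≤ ∫⁻ t in Ioc (k * τ) (k * τ + τ), f t) :
    ENNReal.ofReal (N * ε) ≤ ∫⁻ t in Ioc 0 (N * τ), f t := by
  induction N with
  | zero => simp
  | succ k ih =>
    rw [Nat.cast_succ, add_one_mul, add_one_mul, ENNReal.ofReal_add (by positivity) hε,
      ← Ioc_union_Ioc_eq_Ioc (mul_nonneg k.cast_nonneg hτ) (le_add_of_nonneg_right hτ),
      lintegral_union measurableSet_Ioc (Ioc_disjoint_Ioc_of_le le_rfl)]
    exact add_le_add (ih fun j hj => h j (Nat.lt_succ_of_lt hj)) (h k (Nat.lt_succ_self k))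

theorem ofReal_div_mul_sub_le_pathAction {V : E → E} {K : Set E} {τ ε T : ℝ} (hτ : 0 < τ)
    (hε : 0 ≤ ε)
    (hwin : ∀ (a : ℝ) (ψ g : ℝ → E), IntervalIntegrable g volume a (a + τ) →
      (∀ t ∈ Icc a (a + τ), ψ t = ψ a + ∫ u in a..t, g u) → MapsTo ψ (Icc a (a + τ)) K →
      ENNReal.ofReal ε ≤ pathAction V g ψ a (a + τ))
    {φ g : ℝ → E} (hg : IntervalIntegrable g volume 0 T)
    (hφ : ∀ t ∈ Icc 0 T, φ t = φ 0 + ∫ u in 0..t, g u) (hφK : MapsTo φ (Icc 0 T) K) :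
    ENNReal.ofReal (ε / τ * (T - τ)) ≤ pathAction V g φ 0 T := by
  rcases lt_or_ge T τ with hTτ | hτT
  · rw [ENNReal.ofReal_of_nonpos (mul_nonpos_of_nonneg_of_nonpos (by positivity) (by linarith))]
    exact bot_le
  set N := ⌊T / τ⌋₊
  have hNT : N * τ ≤ T := (le_div_iff₀ hτ).1 (Nat.floor_le (div_nonneg (hτ.le.trans hτT) hτ.le))
  have hwinN : ∀ k < N, ENNReal.ofReal ε ≤ pathAction V g φ (k * τ) (k * τ + τ) := by
    intro k hk
    have ha₀ : 0 ≤ k * τ := by positivity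
    have hkT : k * τ + τ ≤ T := by
      have : (k : ℝ) + 1 ≤ N := by exact_mod_cast hk
      nlinarith
    refine hwin _ φ g (hg.mono_set (uIcc_subset_uIcc (mem_uIcc_of_le ha₀ (by linarith))
      (mem_uIcc_of_le (by linarith) hkT))) (fun t ht => eq_add_of_sub_eq' ?_)
      (hφK.mono_left (Icc_subset_Icc ha₀ hkT))
    exact sub_eq_intervalIntegral_of_eq_add_integral hg hφ ⟨ha₀, by linarith⟩
      ⟨ha₀.trans ht.1, ht.2.trans hkT⟩
  calc ENNReal.ofReal (ε / τ * (T - τ)) ≤ ENNReal.ofReal (N * ε) := by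
        refine ENNReal.ofReal_le_ofReal ?_
        have : T / τ < N + 1 := Nat.lt_floor_add_one _
        rw [div_mul_eq_mul_div, div_le_iff₀ hτ]
        rw [div_lt_iff₀ hτ] at this
        nlinarith
    _ ≤ pathAction V g φ 0 (N * τ) := ofReal_natCast_mul_le_lintegral_Ioc hτ.le hε N hwinN
    _ ≤ pathAction V g φ 0 T := lintegral_mono_set (Ioc_subset_Ioc_right hNT)

end

theorem confined_paths_energy_lower_bound_general {d : ℕ}
    (b : ℝ → EuclideanSpace ℝ (Fin d) → EuclideanSpace ℝ (Fin d))
    (hLipX : ∀ R > (0:ℝ), ∀ x : EuclideanSpace ℝ (Fin d), ∃ K ≥ (0:ℝ),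
      ∀ t ≥ (0:ℝ), ∀ y₁ ∈ Metric.closedBall x R, ∀ y₂ ∈ Metric.closedBall x R,
        ‖b t y₁ - b t y₂‖ ≤ K * ‖y₁ - y₂‖)
    (hLipT : ∀ R > (0:ℝ), ∀ x : EuclideanSpace ℝ (Fin d), ∃ κ ≥ (0:ℝ),
      ∀ s ≥ (0:ℝ), ∀ t ≥ (0:ℝ), ∀ y ∈ Metric.closedBall x R,
        ‖b t y - b s y‖ ≤ κ * |t - s|)
    (xm : EuclideanSpace ℝ (Fin d)) (Am : Set (EuclideanSpace ℝ (Fin d)))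
    (hAm : ∀ s ≥ (0:ℝ), Am = {y | ∀ φ : ℝ → EuclideanSpace ℝ (Fin d),
        (∀ t ∈ Ici (0:ℝ), HasDerivWithinAt φ (b s (φ t)) (Ici (0:ℝ)) t) → φ 0 = y →
        Tendsto φ atTop (𝓝 xm)})
    (K : Set (EuclideanSpace ℝ (Fin d))) (hKc : IsCompact K) (hK : K ⊆ Am \ {xm}) :
    ∃ T₀ > (0:ℝ), ∃ c > (0:ℝ), ∀ T ≥ T₀, ∀ s ∈ Icc (0:ℝ) 1,
      ∀ φ : ℝ → EuclideanSpace ℝ (Fin d), ContinuousOn φ (Icc (0:ℝ) T) →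
        (∀ t ∈ Icc (0:ℝ) T, φ t ∈ K) →
        ENNReal.ofReal (c * (T - T₀)) ≤ frozenRate b s T φ := by
  obtain ⟨L, hbL, hbc⟩ := exists_lipschitzOnWith_and_continuousOn_uncurry hLipX hLipT hKc.isBounded
  have hsol : ∀ s ∈ Icc (0 : ℝ) 1, ∀ ψ : ℝ → EuclideanSpace ℝ (Fin d),
      (∀ t ∈ Ici (0 : ℝ), HasDerivWithinAt ψ (b s (ψ t)) (Ici 0) t) → ¬ MapsTo ψ (Ici 0) K := by
    intro s hs ψ hψ hψK
    have hψ₀ := (hK (hψK self_mem_Ici)).1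
    rw [hAm s hs.1] at hψ₀
    exact (hK (hKc.isClosed.mem_of_tendsto (hψ₀ ψ hψ rfl)
      ((eventually_ge_atTop 0).mono fun t ht => hψK ht))).2 rfl
  obtain ⟨τ, hτ, ε, hε, hwin⟩ := exists_pathAction_lower_bound isCompact_Icc hKc
    (hbc.mono (prod_mono Icc_subset_Ici_self le_rfl)) (fun s hs => hbL s hs.1) hsol
  refine ⟨τ, hτ, ε / τ, by positivity, fun T hT s hs φ _ hφK => le_iInf₂ fun g ⟨hg, hφ⟩ => ?_⟩
  exact ofReal_div_mul_sub_le_pathAction hτ hε.le (hwin s hs)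
    ((intervalIntegrable_iff_integrableOn_Ioc_of_le (hτ.le.trans hT)).2 (hg.integrable one_le_two))
    hφ hφK

/-- Lemma 2.7: paths confined to a compact subset of `A_− \ {x_−}`
have energy growing at least linearly in time, uniformly in `s ∈ [0,1]`. -/
theorem confined_paths_energy_lower_bound {d : ℕ} (hd : 1 ≤ d)
    (b : ℝ → EuclideanSpace ℝ (Fin d) → EuclideanSpace ℝ (Fin d))
    (hper : ∀ t ≥ (0:ℝ), ∀ x, b (t + 1) x = b t x)
    (hLipX : ∀ R > (0:ℝ), ∀ x : EuclideanSpace ℝ (Fin d), ∃ K ≥ (0:ℝ),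
      ∀ t ≥ (0:ℝ), ∀ y₁ ∈ Metric.closedBall x R, ∀ y₂ ∈ Metric.closedBall x R,
        ‖b t y₁ - b t y₂‖ ≤ K * ‖y₁ - y₂‖)
    (hLipT : ∀ R > (0:ℝ), ∀ x : EuclideanSpace ℝ (Fin d), ∃ κ ≥ (0:ℝ),
      ∀ s ≥ (0:ℝ), ∀ t ≥ (0:ℝ), ∀ y ∈ Metric.closedBall x R,
        ‖b t y - b s y‖ ≤ κ * |t - s|)
    (hgrow : ∃ η > (0:ℝ), ∃ R₀ > (0:ℝ), ∀ t ≥ (0:ℝ),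
      ∀ x : EuclideanSpace ℝ (Fin d), R₀ ≤ ‖x‖ → ⟪x, b t x⟫ < -η * ‖x‖)
    (xm xp : EuclideanSpace ℝ (Fin d)) (Am Ap : Set (EuclideanSpace ℝ (Fin d)))
    (heqm : ∀ s ≥ (0:ℝ), b s xm = 0) (heqp : ∀ s ≥ (0:ℝ), b s xp = 0)
    (hAm : ∀ s ≥ (0:ℝ), Am = {y | ∀ φ : ℝ → EuclideanSpace ℝ (Fin d),
        (∀ t ∈ Ici (0:ℝ), HasDerivWithinAt φ (b s (φ t)) (Ici (0:ℝ)) t) → φ 0 = y →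
        Tendsto φ atTop (𝓝 xm)})
    (hAp : ∀ s ≥ (0:ℝ), Ap = {y | ∀ φ : ℝ → EuclideanSpace ℝ (Fin d),
        (∀ t ∈ Ici (0:ℝ), HasDerivWithinAt φ (b s (φ t)) (Ici (0:ℝ)) t) → φ 0 = y →
        Tendsto φ atTop (𝓝 xp)})
    (hxm : xm ∈ Am) (hxp : xp ∈ Ap)
    (hcl : closure (Am ∪ Ap) = univ)
    (hbd : frontier Am = frontier Ap)
    (K : Set (EuclideanSpace ℝ (Fin d))) (hKc : IsCompact K) (hK : K ⊆ Am \ {xm}) :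
    ∃ T₀ > (0:ℝ), ∃ c > (0:ℝ), ∀ T ≥ T₀, ∀ s ∈ Icc (0:ℝ) 1,
      ∀ φ : ℝ → EuclideanSpace ℝ (Fin d), ContinuousOn φ (Icc (0:ℝ) T) →
        (∀ t ∈ Icc (0:ℝ) T, φ t ∈ K) →
        ENNReal.ofReal (c * (T - T₀)) ≤ frozenRate b s T φ :=
  confined_paths_energy_lower_bound_general b hLipX hLipT xm Am hAm K hKc hK
end

section
/- Let K be a compact subset of A_− \ {x_−}. For s ∈ [0,1] and x ∈ K, let φ_{s,x} denote the (unique, globally defined) solution of φ̇(t) = b(s, φ(t)) with φ(0) = x, and let τ(s,x) = inf{ t ≥ 0 : φ_{s,x}(t) ∉ K } be its first exit time from K. Then τ(s,x) < ∞ for all (s,x) ∈ [0,1] × K, the function (s,x) ↦ τ(s,x) is upper semi-continuous, and T₁ := sup_{s ∈ [0,1], x ∈ K} τ(s,x) is finite. -/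
open MeasureTheory Set Filter Topology
open scoped RealInnerProductSpace ENNReal

open scoped NNReal

/-!
Each point of `K ⊆ A₋ \ {x₋}` is attracted to `x₋ ∉ K`, so every trajectory leaves the
closed set `K`. The dissipativity condition `⟪x, b t x⟫ < -η‖x‖` traps all trajectories
started in `K` in a fixed ball, on which `b` is Lipschitz in both variables; Grönwall's
inequality then makes the position at each fixed time `t` continuous in `(s, x)`. If the
trajectory from `(s, x)` is outside `K` at some time `t < y`, so are the nearby ones, which
is upper semicontinuity of the exit time, and an upper semicontinuous function is bounded
above on the compact set `[0,1] × K`.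
-/

theorem norm_le_of_hasDerivWithinAt_of_inner_neg {E : Type*} [NormedAddCommGroup E]
    [InnerProductSpace ℝ E] {v : ℝ → E → E} {M : ℝ}
    (hv : ∀ t ≥ (0:ℝ), ∀ x, ‖x‖ = M → ⟪x, v t x⟫ < 0) {φ : ℝ → E}
    (hφ : ∀ t ∈ Ici (0:ℝ), HasDerivWithinAt φ (v t (φ t)) (Ici 0) t) (h0 : ‖φ 0‖ ≤ M)
    {t : ℝ} (ht : 0 ≤ t) : ‖φ t‖ ≤ M := by
  have hM : 0 ≤ M := (norm_nonneg _).trans h0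
  have hsq : ‖φ t‖ ^ 2 ≤ M ^ 2 := by
    refine image_le_of_deriv_right_lt_deriv_boundary' (f := (‖φ ·‖ ^ 2)) (B' := fun _ => 0)
      (fun u hu => ((hφ u hu.1).continuousWithinAt.mono fun _ h => h.1).norm.pow 2)
      (fun u hu => ((hφ u hu.1).mono (Ici_subset_Ici.2 hu.1)).norm_sq)
      (by gcongr) continuousOn_const (fun _ _ => hasDerivWithinAt_const _ _ _) ?_ ⟨ht, le_rfl⟩
    intro u hu hu_eq
    have hnorm : ‖φ u‖ = M := by
      rwa [pow_left_inj₀ (norm_nonneg _) hM two_ne_zero] at hu_eq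
    linarith [hv u hu.1 (φ u) hnorm]
  exact (pow_le_pow_iff_left₀ (norm_nonneg _) hM two_ne_zero).1 hsq

theorem dist_le_gronwallBound_of_mem {E : Type*} [NormedAddCommGroup E] [NormedSpace ℝ E]
    {v w : E → E} {S : Set E} {L : ℝ≥0} {ε : ℝ} (hv : LipschitzOnWith L v S)
    (hwv : ∀ y ∈ S, dist (w y) (v y) ≤ ε) {φ ψ : ℝ → E}
    (hφ : ∀ t ∈ Ici (0:ℝ), HasDerivWithinAt φ (w (φ t)) (Ici 0) t)
    (hψ : ∀ t ∈ Ici (0:ℝ), HasDerivWithinAt ψ (v (ψ t)) (Ici 0) t)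
    (hφS : ∀ t ≥ (0:ℝ), φ t ∈ S) (hψS : ∀ t ≥ (0:ℝ), ψ t ∈ S) {t : ℝ} (ht : 0 ≤ t) :
    dist (φ t) (ψ t) ≤ gronwallBound (dist (φ 0) (ψ 0)) L ε t := by
  have h := dist_le_of_approx_trajectories_ODE_of_mem (v := fun _ => v) (s := fun _ => S)
    (εg := 0) (fun _ _ => hv)
    (fun u hu => (hφ u hu.1).continuousWithinAt.mono fun _ h => h.1)
    (fun u hu => (hφ u hu.1).mono (Ici_subset_Ici.2 hu.1)) (fun u hu => hwv _ (hφS u hu.1))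
    (fun u hu => hφS u hu.1)
    (fun u hu => (hψ u hu.1).continuousWithinAt.mono fun _ h => h.1)
    (fun u hu => (hψ u hu.1).mono (Ici_subset_Ici.2 hu.1)) (fun _ _ => (dist_self _).le)
    (fun u hu => hψS u hu.1) le_rfl t ⟨ht, le_rfl⟩
  simpa using h

theorem continuous_gronwallBound (K x : ℝ) :
    Continuous fun p : ℝ × ℝ => gronwallBound p.1 K p.2 x := by
  unfold gronwallBound
  split_ifs <;> fun_prop

theorem continuousWithinAt_flow_apply {E : Type*} [NormedAddCommGroup E] [NormedSpace ℝ E]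
    {b : ℝ → E → E} {Φ : ℝ → E → ℝ → E} {P : Set ℝ} {X S : Set E} {L : ℝ≥0} {κ s₀ : ℝ}
    {x₀ : E} (hs₀ : s₀ ∈ P) (hx₀ : x₀ ∈ X) (hLip : LipschitzOnWith L (b s₀) S)
    (hκ : ∀ s ∈ P, ∀ y ∈ S, dist (b s y) (b s₀ y) ≤ κ * |s - s₀|)
    (hΦ0 : ∀ s ∈ P, ∀ x ∈ X, Φ s x 0 = x)
    (hΦ : ∀ s ∈ P, ∀ x ∈ X, ∀ t ∈ Ici (0:ℝ), HasDerivWithinAt (Φ s x) (b s (Φ s x t)) (Ici 0) t)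
    (hΦS : ∀ s ∈ P, ∀ x ∈ X, ∀ t ≥ (0:ℝ), Φ s x t ∈ S) {t : ℝ} (ht : 0 ≤ t) :
    ContinuousWithinAt (fun q : ℝ × E => Φ q.1 q.2 t) (P ×ˢ X) (s₀, x₀) := by
  set g : ℝ × E → ℝ := fun q => gronwallBound (dist q.2 x₀) L (κ * |q.1 - s₀|) t
  have hg : Tendsto g (𝓝 (s₀, x₀)) (𝓝 0) := by
    have hcont : Continuous g :=
      (continuous_gronwallBound _ _).comp (by fun_prop : Continuous fun q : ℝ × E =>
        (dist q.2 x₀, κ * |q.1 - s₀|))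
    simpa [g, gronwallBound_ε0_δ0] using hcont.tendsto (s₀, x₀)
  refine tendsto_iff_dist_tendsto_zero.2
    (squeeze_zero' (Eventually.of_forall fun _ => dist_nonneg) ?_ (hg.mono_left inf_le_left))
  filter_upwards [self_mem_nhdsWithin] with q ⟨hs, hx⟩
  have h := dist_le_gronwallBound_of_mem hLip (hκ q.1 hs) (hΦ q.1 hs q.2 hx) (hΦ s₀ hs₀ x₀ hx₀)
    (hΦS q.1 hs q.2 hx) (hΦS s₀ hs₀ x₀ hx₀) ht
  rwa [hΦ0 q.1 hs q.2 hx, hΦ0 s₀ hs₀ x₀ hx₀] at h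

theorem exists_nonneg_notMem_of_tendsto {E : Type*} [TopologicalSpace E] {K : Set E}
    (hK : IsClosed K) {φ : ℝ → E} {z : E} (hφ : Tendsto φ atTop (𝓝 z)) (hz : z ∉ K) :
    ∃ t, 0 ≤ t ∧ φ t ∉ K :=
  ((eventually_ge_atTop 0).and (hφ.eventually_mem (hK.isOpen_compl.mem_nhds hz))).exists

/-- A path that never leaves `K` gets exit time `sInf ∅ = 0`. -/
noncomputable def exitTime {E : Type*} (K : Set E) (φ : ℝ → E) : ℝ :=
  sInf {t : ℝ | 0 ≤ t ∧ φ t ∉ K}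

theorem exitTime_le {E : Type*} {K : Set E} {φ : ℝ → E} {t : ℝ} (ht : 0 ≤ t) (hφt : φ t ∉ K) :
    exitTime K φ ≤ t :=
  csInf_le ⟨0, fun _ h => h.1⟩ ⟨ht, hφt⟩

theorem upperSemicontinuousWithinAt_exitTime {X E : Type*} [TopologicalSpace X]
    [TopologicalSpace E] {K : Set E} (hK : IsClosed K) {γ : X → ℝ → E}
    {D : Set X} {p : X} (hγ : ∀ t ≥ (0:ℝ), ContinuousWithinAt (fun q => γ q t) D p)
    (hexit : ∃ t, 0 ≤ t ∧ γ p t ∉ K) :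
    UpperSemicontinuousWithinAt (fun q => exitTime K (γ q)) D p := by
  intro y hy
  obtain ⟨t, ⟨ht, hγt⟩, hty⟩ := exists_lt_of_csInf_lt hexit hy
  filter_upwards [hγ t ht (hK.isOpen_compl.mem_nhds hγt)] with q hq
  exact (exitTime_le ht hq).trans_lt hty

theorem exit_time_finite_usc_bounded_general {d : ℕ}
    (b : ℝ → EuclideanSpace ℝ (Fin d) → EuclideanSpace ℝ (Fin d))
    (hLipX : ∀ R > (0:ℝ), ∀ x : EuclideanSpace ℝ (Fin d), ∃ K ≥ (0:ℝ),
      ∀ t ≥ (0:ℝ), ∀ y₁ ∈ Metric.closedBall x R, ∀ y₂ ∈ Metric.closedBall x R,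
        ‖b t y₁ - b t y₂‖ ≤ K * ‖y₁ - y₂‖)
    (hLipT : ∀ R > (0:ℝ), ∀ x : EuclideanSpace ℝ (Fin d), ∃ κ ≥ (0:ℝ),
      ∀ s ≥ (0:ℝ), ∀ t ≥ (0:ℝ), ∀ y ∈ Metric.closedBall x R,
        ‖b t y - b s y‖ ≤ κ * |t - s|)
    (hgrow : ∃ η > (0:ℝ), ∃ R₀ > (0:ℝ), ∀ t ≥ (0:ℝ),
      ∀ x : EuclideanSpace ℝ (Fin d), R₀ ≤ ‖x‖ → ⟪x, b t x⟫ < -η * ‖x‖)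
    (xm : EuclideanSpace ℝ (Fin d)) (Am : Set (EuclideanSpace ℝ (Fin d)))
    (hAm : ∀ s ≥ (0:ℝ), Am = {y | ∀ φ : ℝ → EuclideanSpace ℝ (Fin d),
        (∀ t ∈ Ici (0:ℝ), HasDerivWithinAt φ (b s (φ t)) (Ici (0:ℝ)) t) → φ 0 = y →
        Tendsto φ atTop (𝓝 xm)})
    (K : Set (EuclideanSpace ℝ (Fin d))) (hKc : IsCompact K) (hK : K ⊆ Am \ {xm})
    (Φ : ℝ → EuclideanSpace ℝ (Fin d) → ℝ → EuclideanSpace ℝ (Fin d))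
    (hΦ0 : ∀ s ∈ Icc (0:ℝ) 1, ∀ x ∈ K, Φ s x 0 = x)
    (hΦ : ∀ s ∈ Icc (0:ℝ) 1, ∀ x ∈ K, ∀ t ∈ Ici (0:ℝ),
      HasDerivWithinAt (Φ s x) (b s (Φ s x t)) (Ici (0:ℝ)) t) :
    (∀ s ∈ Icc (0:ℝ) 1, ∀ x ∈ K, ∃ t, 0 ≤ t ∧ Φ s x t ∉ K) ∧
    UpperSemicontinuousOn
      (fun p : ℝ × EuclideanSpace ℝ (Fin d) => sInf {t : ℝ | 0 ≤ t ∧ Φ p.1 p.2 t ∉ K})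
      (Icc (0:ℝ) 1 ×ˢ K) ∧
    BddAbove
      ((fun p : ℝ × EuclideanSpace ℝ (Fin d) => sInf {t : ℝ | 0 ≤ t ∧ Φ p.1 p.2 t ∉ K}) ''
        (Icc (0:ℝ) 1 ×ˢ K)) := by
  have hexit : ∀ s ∈ Icc (0:ℝ) 1, ∀ x ∈ K, ∃ t, 0 ≤ t ∧ Φ s x t ∉ K := fun s hs x hx =>
    exists_nonneg_notMem_of_tendsto hKc.isClosed
      ((hAm s hs.1 ▸ (hK hx).1) _ (hΦ s hs x hx) (hΦ0 s hs x hx)) fun h => (hK h).2 rfl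
  obtain ⟨η, hη, R₀, hR₀, hgrow⟩ := hgrow
  obtain ⟨r, hKr⟩ := hKc.isBounded.subset_closedBall 0
  set M := max R₀ r
  have hM : 0 < M := hR₀.trans_le (le_max_left _ _)
  obtain ⟨L, -, hL⟩ := hLipX M hM 0
  obtain ⟨κ, -, hκ⟩ := hLipT M hM 0
  have hball : ∀ s ∈ Icc (0:ℝ) 1, ∀ x ∈ K, ∀ t ≥ (0:ℝ), Φ s x t ∈ Metric.closedBall 0 M := by
    intro s hs x hx t ht
    refine mem_closedBall_zero_iff.2 (norm_le_of_hasDerivWithinAt_of_inner_neg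
      (fun t _ y hy => ?_) (hΦ s hs x hx) ?_ ht)
    · nlinarith [hgrow s hs.1 y (hy ▸ le_max_left _ _)]
    · rw [hΦ0 s hs x hx]
      exact (mem_closedBall_zero_iff.1 (hKr hx)).trans (le_max_right _ _)
  have hLip : ∀ s₀ ≥ (0:ℝ), LipschitzOnWith L.toNNReal (b s₀) (Metric.closedBall 0 M) :=
    fun s₀ hs₀ => .of_dist_le' fun y₁ h₁ y₂ h₂ => by
      simpa only [dist_eq_norm] using hL s₀ hs₀ y₁ h₁ y₂ h₂
  have husc : UpperSemicontinuousOn (fun p : ℝ × _ => exitTime K (Φ p.1 p.2)) (Icc 0 1 ×ˢ K) :=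
    fun ⟨s₀, x₀⟩ ⟨hs₀, hx₀⟩ => upperSemicontinuousWithinAt_exitTime hKc.isClosed
      (fun _ ht => continuousWithinAt_flow_apply hs₀ hx₀ (hLip s₀ hs₀.1)
        (fun s hs y hy => by simpa only [dist_eq_norm] using hκ s₀ hs₀.1 s hs.1 y hy)
        hΦ0 hΦ hball ht) (hexit s₀ hs₀ x₀ hx₀)
  exact ⟨hexit, husc, husc.bddAbove_of_isCompact (isCompact_Icc.prod hKc)⟩

/-- finiteness and upper semicontinuity of the first exit time of the
deterministic flow from a compact subset `K ⊆ A_− \ {x_−}`, and finiteness of its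
supremum over `(s,x) ∈ [0,1] × K`. -/
theorem exit_time_finite_usc_bounded {d : ℕ} (hd : 1 ≤ d)
    (b : ℝ → EuclideanSpace ℝ (Fin d) → EuclideanSpace ℝ (Fin d))
    (hper : ∀ t ≥ (0:ℝ), ∀ x, b (t + 1) x = b t x)
    (hLipX : ∀ R > (0:ℝ), ∀ x : EuclideanSpace ℝ (Fin d), ∃ K ≥ (0:ℝ),
      ∀ t ≥ (0:ℝ), ∀ y₁ ∈ Metric.closedBall x R, ∀ y₂ ∈ Metric.closedBall x R,
        ‖b t y₁ - b t y₂‖ ≤ K * ‖y₁ - y₂‖)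
    (hLipT : ∀ R > (0:ℝ), ∀ x : EuclideanSpace ℝ (Fin d), ∃ κ ≥ (0:ℝ),
      ∀ s ≥ (0:ℝ), ∀ t ≥ (0:ℝ), ∀ y ∈ Metric.closedBall x R,
        ‖b t y - b s y‖ ≤ κ * |t - s|)
    (hgrow : ∃ η > (0:ℝ), ∃ R₀ > (0:ℝ), ∀ t ≥ (0:ℝ),
      ∀ x : EuclideanSpace ℝ (Fin d), R₀ ≤ ‖x‖ → ⟪x, b t x⟫ < -η * ‖x‖)
    (xm xp : EuclideanSpace ℝ (Fin d)) (Am Ap : Set (EuclideanSpace ℝ (Fin d)))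
    (heqm : ∀ s ≥ (0:ℝ), b s xm = 0) (heqp : ∀ s ≥ (0:ℝ), b s xp = 0)
    (hAm : ∀ s ≥ (0:ℝ), Am = {y | ∀ φ : ℝ → EuclideanSpace ℝ (Fin d),
        (∀ t ∈ Ici (0:ℝ), HasDerivWithinAt φ (b s (φ t)) (Ici (0:ℝ)) t) → φ 0 = y →
        Tendsto φ atTop (𝓝 xm)})
    (hAp : ∀ s ≥ (0:ℝ), Ap = {y | ∀ φ : ℝ → EuclideanSpace ℝ (Fin d),
        (∀ t ∈ Ici (0:ℝ), HasDerivWithinAt φ (b s (φ t)) (Ici (0:ℝ)) t) → φ 0 = y →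
        Tendsto φ atTop (𝓝 xp)})
    (hxm : xm ∈ Am) (hxp : xp ∈ Ap)
    (hcl : closure (Am ∪ Ap) = univ)
    (hbd : frontier Am = frontier Ap)
    (K : Set (EuclideanSpace ℝ (Fin d))) (hKc : IsCompact K) (hK : K ⊆ Am \ {xm})
    (Φ : ℝ → EuclideanSpace ℝ (Fin d) → ℝ → EuclideanSpace ℝ (Fin d))
    (hΦ0 : ∀ s ∈ Icc (0:ℝ) 1, ∀ x ∈ K, Φ s x 0 = x)
    (hΦ : ∀ s ∈ Icc (0:ℝ) 1, ∀ x ∈ K, ∀ t ∈ Ici (0:ℝ),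
      HasDerivWithinAt (Φ s x) (b s (Φ s x t)) (Ici (0:ℝ)) t)
    (hΦuniq : ∀ s ∈ Icc (0:ℝ) 1, ∀ x ∈ K, ∀ ψ : ℝ → EuclideanSpace ℝ (Fin d),
      ψ 0 = x → (∀ t ∈ Ici (0:ℝ), HasDerivWithinAt ψ (b s (ψ t)) (Ici (0:ℝ)) t) →
      ∀ t ∈ Ici (0:ℝ), ψ t = Φ s x t) :
    (∀ s ∈ Icc (0:ℝ) 1, ∀ x ∈ K, ∃ t, 0 ≤ t ∧ Φ s x t ∉ K) ∧
    UpperSemicontinuousOn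
      (fun p : ℝ × EuclideanSpace ℝ (Fin d) => sInf {t : ℝ | 0 ≤ t ∧ Φ p.1 p.2 t ∉ K})
      (Icc (0:ℝ) 1 ×ˢ K) ∧
    BddAbove
      ((fun p : ℝ × EuclideanSpace ℝ (Fin d) => sInf {t : ℝ | 0 ≤ t ∧ Φ p.1 p.2 t ∉ K}) ''
        (Icc (0:ℝ) 1 ×ˢ K)) :=
  exit_time_finite_usc_bounded_general b hLipX hLipT hgrow xm Am hAm K hKc hK Φ hΦ0 hΦ
end

section
/- Let K be a compact subset of A_− \ {x_−} and let T₀ > 0 be strictly larger than the supremum over s ∈ [0,1] and x ∈ K of the first exit time from K of the solution of φ̇ = b(s,φ) started at x. Then the minimal confined energy is strictly positive uniformly in s: m := inf_{s ∈ [0,1]} inf{ I^s_{0T₀}(φ) : φ ∈ C([0,T₀],ℝ^d), φ_t ∈ K for all t ∈ [0,T₀] } > 0. -/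
open MeasureTheory Set Filter Topology
open scoped RealInnerProductSpace ENNReal

/-! Every solution of `ψ̇ = b(s, ψ)` started in `K` leaves `K` before time `T₀`. Solutions depend
continuously on `(s, x)`, so by compactness of `[0, 1] × K` each of them reaches distance at least
some `δ > 0` from `K` within `[0, T₀]`. A path `φ` confined to `K` is compared with the solution `ψ`
started at `φ 0`: if `L` is a Lipschitz constant of `b` on a ball containing `K`, an integral
Grönwall inequality gives `‖φ t - ψ t‖ ≤ e^{L T₀} ∫₀^{T₀} ‖φ̇ - b(s, φ)‖`, so this integral is at
least `δ e^{-L T₀}`, and Cauchy–Schwarz turns that into `I^s_{0T₀}(φ) ≥ (δ e^{-L T₀})² / (2 T₀)`.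
The solutions exist for all times because `b` points inwards outside a large ball. -/

open Metric
open scoped NNReal

section IntegralCurve

variable {E : Type*} [NormedAddCommGroup E] [NormedSpace ℝ E]
  {γ : ℝ → E} {v : ℝ → E → E} {s : Set ℝ} {a b t : ℝ}

theorem IsIntegralCurveOn.hasDerivWithinAt_Ici (hγ : IsIntegralCurveOn γ v s)
    (hs : Icc a b ⊆ s) (ht : t ∈ Ico a b) : HasDerivWithinAt γ (v t (γ t)) (Ici t) t :=
  (hγ t (hs (Ico_subset_Icc_self ht))).mono_of_mem_nhdsWithin <|
    mem_of_superset (Icc_mem_nhdsGE ht.2) ((Icc_subset_Icc_left ht.1).trans hs)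

theorem IsIntegralCurveOn.piecewise_Icc {f g : ℝ → E} {c : ℝ} (hab : a ≤ b) (hbc : b ≤ c)
    (hf : IsIntegralCurveOn f v (Icc a b)) (hg : IsIntegralCurveOn g v (Icc b c))
    (hfg : f b = g b) :
    IsIntegralCurveOn (fun t => if t ≤ b then f t else g t) v (Icc a c) := by
  set γ := fun t => if t ≤ b then f t else g t
  have hγf : EqOn γ f (Icc a b) := fun t ht => if_pos ht.2
  have hγg : EqOn γ g (Icc b c) := fun t ht => by
    rcases ht.1.eq_or_lt with rfl | hlt
    · exact (if_pos le_rfl).trans hfg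
    · exact if_neg hlt.not_ge
  intro t _
  rw [← Icc_union_Icc_eq_Icc hab hbc]
  refine HasDerivWithinAt.union ?_ ?_
  · by_cases ht : t ∈ Icc a b
    · exact (hγf ht ▸ hf t ht).congr hγf (hγf ht)
    · exact HasFDerivWithinAt.of_notMem_closure (by rwa [closure_Icc])
  · by_cases ht : t ∈ Icc b c
    · exact (hγg ht ▸ hg t ht).congr hγg (hγg ht)
    · exact HasFDerivWithinAt.of_notMem_closure (by rwa [closure_Icc])

theorem IsIntegralCurveOn.integral_eq_sub [CompleteSpace E] (hγ : IsIntegralCurveOn γ v (Icc a b))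
    (hab : a ≤ b) (hint : IntervalIntegrable (fun t => v t (γ t)) volume a b) :
    ∫ t in a..b, v t (γ t) = γ b - γ a :=
  intervalIntegral.integral_eq_sub_of_hasDeriv_right_of_le hab hγ.continuousOn
    (fun t ht => ((hγ t (Ioo_subset_Icc_self ht)).hasDerivAt (Icc_mem_nhds ht.1 ht.2))
      |>.hasDerivWithinAt) hint

theorem exists_isIntegralCurveOn_Ici_of_forall_Icc {s : Set E} {K : ℝ≥0}
    (hv : ∀ t, LipschitzOnWith K (v t) s) {x : E}
    (h : ∀ T : ℝ, ∃ f : ℝ → E, f 0 = x ∧ IsIntegralCurveOn f v (Icc 0 T) ∧ MapsTo f (Icc 0 T) s) :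
    ∃ ψ : ℝ → E, ψ 0 = x ∧ IsIntegralCurveOn ψ v (Ici 0) ∧ MapsTo ψ (Ici 0) s := by
  choose f hf0 hf hfs using fun n : ℕ => h n
  have agree : ∀ m n : ℕ, m ≤ n → EqOn (f m) (f n) (Icc 0 m) := fun m n hmn => by
    have hsub : Icc (0 : ℝ) m ⊆ Icc 0 n := Icc_subset_Icc_right (by exact_mod_cast hmn)
    exact ODE_solution_unique_of_mem_Icc_right (fun t _ => hv t) (hf m).continuousOn
      (fun t ht => (hf m).hasDerivWithinAt_Ici subset_rfl ht)
      (fun t ht => hfs m (Ico_subset_Icc_self ht)) ((hf n).continuousOn.mono hsub)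
      (fun t ht => (hf n).hasDerivWithinAt_Ici hsub ht)
      (fun t ht => hfs n (hsub (Ico_subset_Icc_self ht))) ((hf0 m).trans (hf0 n).symm)
  have hlt : ∀ t : ℝ, t < (⌊t⌋₊ + 1 : ℕ) := fun t => by exact_mod_cast Nat.lt_floor_add_one t
  set ψ : ℝ → E := fun t => f (⌊t⌋₊ + 1) t
  have hψ : ∀ n : ℕ, EqOn ψ (f n) (Icc 0 n) := fun n t ht => by
    rcases le_total (⌊t⌋₊ + 1) n with h | h
    · exact agree _ n h ⟨ht.1, (hlt t).le⟩
    · exact (agree n _ h ht).symm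
  refine ⟨ψ, (hψ 1 ⟨le_rfl, Nat.cast_nonneg 1⟩).trans (hf0 1), fun t ht => ?_, fun t ht => ?_⟩
  · set N := ⌊t⌋₊ + 1
    have hmem : Icc (0 : ℝ) N ∈ 𝓝[Ici 0] t :=
      mem_nhdsWithin.2 ⟨Iio N, isOpen_Iio, hlt t, fun u hu => ⟨hu.2, hu.1.le⟩⟩
    have hψN : ψ t = f N t := hψ N ⟨ht, (hlt t).le⟩
    rw [hψN]
    exact ((hf N t ⟨ht, (hlt t).le⟩).mono_of_mem_nhdsWithin hmem).congr_of_eventuallyEq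
      (eventually_of_mem hmem (hψ N)) hψN
  · exact hψ _ ⟨ht, (hlt t).le⟩ ▸ hfs _ ⟨ht, (hlt t).le⟩

end IntegralCurve

section InwardField

variable {F : Type*} [NormedAddCommGroup F] [InnerProductSpace ℝ F] {v : F → F}

theorem IsIntegralCurveOn.mapsTo_closedBall {R : ℝ} (hinv : ∀ y : F, R ≤ ‖y‖ → ⟪y, v y⟫ ≤ 0)
    {f : ℝ → F} {a b : ℝ} (hf : IsIntegralCurveOn f (fun _ => v) (Icc a b))
    (ha : f a ∈ closedBall 0 R) : MapsTo f (Icc a b) (closedBall 0 R) := by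
  rw [mem_closedBall_zero_iff] at ha
  have hR : 0 ≤ R := (norm_nonneg _).trans ha
  -- `‖f‖²` cannot cross the strictly increasing barriers `R² + ε (t - a)`
  have barrier : ∀ ε > 0, ∀ t ∈ Icc a b, ‖f t‖ ^ 2 ≤ R ^ 2 + ε * (t - a) := by
    intro ε hε
    refine image_le_of_deriv_right_lt_deriv_boundary' (hf.continuousOn.norm.pow 2)
      (fun t ht => (hf.hasDerivWithinAt_Ici subset_rfl ht).norm_sq)
      (by simpa using pow_le_pow_left₀ (norm_nonneg _) ha 2) (by fun_prop)
      (fun t _ => (((hasDerivAt_id t).sub_const a).const_mul ε).const_add _ |>.hasDerivWithinAt)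
      fun t ht heq => ?_
    have heq : ‖f t‖ ^ 2 = R ^ 2 + ε * (t - a) := heq
    have hRt : R ≤ ‖f t‖ :=
      (pow_le_pow_iff_left₀ hR (norm_nonneg _) two_ne_zero).1 (by nlinarith [ht.1])
    linarith [hinv (f t) hRt]
  intro t ht
  have hta : 0 ≤ t - a := sub_nonneg.2 ht.1
  refine mem_closedBall_zero_iff.2 <| (pow_le_pow_iff_left₀ (norm_nonneg _) hR two_ne_zero).1 <|
    le_of_forall_pos_le_add fun ε hε => ?_
  calc ‖f t‖ ^ 2 ≤ R ^ 2 + ε / (t - a + 1) * (t - a) := barrier _ (by positivity) t ht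
    _ ≤ R ^ 2 + ε := by
      rw [div_mul_eq_mul_div]
      gcongr
      exact div_le_of_le_mul₀ (by positivity) hε.le (by nlinarith)

variable [CompleteSpace F] {R L : ℝ≥0}

/-- `‖v 0‖ + L (R + 1)` bounds `‖v‖` on `closedBall 0 (R + 1)`, so during a time `τ` a solution
started in `closedBall 0 R` cannot leave `closedBall 0 (R + 1)`. -/
theorem exists_isIntegralCurveOn_Icc_add (hv : LipschitzOnWith L v (closedBall 0 (R + 1)))
    {τ : ℝ} (hτ : 0 ≤ τ) (hτM : (‖v 0‖ + L * (R + 1)) * τ ≤ 1) (t₀ : ℝ) {y : F}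
    (hy : y ∈ closedBall 0 R) :
    ∃ g : ℝ → F, g t₀ = y ∧ IsIntegralCurveOn g (fun _ => v) (Icc t₀ (t₀ + τ)) := by
  have hbound : ∀ x ∈ closedBall (0 : F) (R + 1), ‖v x‖ ≤ ‖v 0‖₊ + L * (R + 1) := by
    intro x hx
    have := hv.norm_sub_le hx (mem_closedBall_self (by positivity))
    rw [sub_zero] at this
    rw [mem_closedBall_zero_iff] at hx
    push_cast
    nlinarith [norm_le_norm_add_norm_sub' (v x) (v 0), L.2]
  have hpl : IsPicardLindelof (fun _ => v) (tmin := t₀) (tmax := t₀ + τ)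
      ⟨t₀, le_rfl, by linarith⟩ 0 (R + 1) R (‖v 0‖₊ + L * (R + 1)) L :=
    .of_time_independent hbound hv (by push_cast; simpa [hτ] using hτM)
  exact hpl.exists_eq_forall_mem_Icc_hasDerivWithinAt hy

theorem exists_isIntegralCurveOn_Icc_zero (hinv : ∀ y : F, R ≤ ‖y‖ → ⟪y, v y⟫ ≤ 0)
    (hv : LipschitzOnWith L v (closedBall 0 (R + 1))) {x : F} (hx : x ∈ closedBall 0 R)
    (T : ℝ) : ∃ f : ℝ → F, f 0 = x ∧ IsIntegralCurveOn f (fun _ => v) (Icc 0 T) := by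
  set τ : ℝ := 1 / (‖v 0‖ + L * (R + 1) + 1)
  have hτ : 0 < τ := by positivity
  have hτM : (‖v 0‖ + L * (R + 1)) * τ ≤ 1 := by
    rw [mul_one_div, div_le_one (by positivity)]; linarith
  have step : ∀ n : ℕ, ∃ f : ℝ → F, f 0 = x ∧
      IsIntegralCurveOn f (fun _ => v) (Icc 0 (n * τ)) := by
    intro n
    induction n with
    | zero =>
      obtain ⟨g, hg0, hg⟩ := exists_isIntegralCurveOn_Icc_add hv hτ.le hτM 0 hx
      exact ⟨g, hg0, hg.mono (Icc_subset_Icc_right (by simpa using hτ.le))⟩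
    | succ n ih =>
      obtain ⟨f, hf0, hf⟩ := ih
      have hfn := hf.mapsTo_closedBall hinv (hf0 ▸ hx) ⟨by positivity, le_rfl⟩
      obtain ⟨g, hg0, hg⟩ := exists_isIntegralCurveOn_Icc_add hv hτ.le hτM (n * τ) hfn
      refine ⟨fun t => if t ≤ n * τ then f t else g t, (if_pos (by positivity)).trans hf0, ?_⟩
      rw [Nat.cast_succ, add_one_mul]
      exact hf.piecewise_Icc (by positivity) (by linarith) hg hg0.symm
  obtain ⟨n, hn⟩ := exists_nat_ge (T / τ)
  obtain ⟨f, hf0, hf⟩ := step n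
  exact ⟨f, hf0, hf.mono (Icc_subset_Icc_right ((div_le_iff₀ hτ).1 hn))⟩

theorem exists_isIntegralCurveOn_Ici_mapsTo_closedBall
    (hinv : ∀ y : F, R ≤ ‖y‖ → ⟪y, v y⟫ ≤ 0) (hv : LipschitzOnWith L v (closedBall 0 (R + 1)))
    {x : F} (hx : x ∈ closedBall 0 R) :
    ∃ ψ : ℝ → F, ψ 0 = x ∧ IsIntegralCurveOn ψ (fun _ => v) (Ici 0) ∧
      MapsTo ψ (Ici 0) (closedBall 0 R) :=
  exists_isIntegralCurveOn_Ici_of_forall_Icc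
    (fun _ => hv.mono (closedBall_subset_closedBall (by simp))) fun T =>
    let ⟨f, hf0, hf⟩ := exists_isIntegralCurveOn_Icc_zero hinv hv hx T
    ⟨f, hf0, hf, hf.mapsTo_closedBall hinv (hf0 ▸ hx)⟩

end InwardField

theorem gronwallBound_le_mul_exp {δ K ε x : ℝ} (hK : 0 ≤ K) (hε : 0 ≤ ε) :
    gronwallBound δ K ε x ≤ (δ + ε * x) * Real.exp (K * x) := by
  rcases hK.eq_or_lt with rfl | hK
  · simp [gronwallBound_K0]
  rw [gronwallBound_of_K_ne_0 hK.ne']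
  -- `1 - y ≤ exp (-y)` multiplied by `exp y`
  have key : Real.exp (K * x) - 1 ≤ K * x * Real.exp (K * x) := by
    have h := Real.add_one_le_exp (-(K * x))
    have h' : Real.exp (-(K * x)) * Real.exp (K * x) = 1 := by
      rw [← Real.exp_add, neg_add_cancel, Real.exp_zero]
    nlinarith [Real.exp_pos (K * x)]
  have : ε / K * (Real.exp (K * x) - 1) ≤ ε * x * Real.exp (K * x) :=
    calc ε / K * (Real.exp (K * x) - 1) ≤ ε / K * (K * x * Real.exp (K * x)) := by gcongr
      _ = ε * x * Real.exp (K * x) := by field_simp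
  nlinarith

theorem le_mul_exp_of_le_add_mul_integral {u : ℝ → ℝ} {A L T : ℝ} (hL : 0 ≤ L)
    (hu : ContinuousOn u (Icc 0 T)) (h : ∀ t ∈ Icc 0 T, u t ≤ A + L * ∫ s in 0..t, u s) :
    ∀ t ∈ Icc 0 T, u t ≤ A * Real.exp (L * t) := by
  intro T' hT'
  replace hu := hu.mono (Icc_subset_Icc_right hT'.2)
  set w : ℝ → ℝ := fun t => ∫ s in 0..t, u s
  have hw : ContinuousOn w (Icc 0 T') :=
    (intervalIntegral.continuousOn_primitive_interval' (hu.intervalIntegrable_of_Icc hT'.1)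
      left_mem_uIcc).mono Icc_subset_uIcc
  have hw' : ∀ t ∈ Ico 0 T', HasDerivWithinAt w (u t) (Ici t) t := by
    intro t ht
    have hmem : Icc 0 T' ∈ 𝓝[>] t :=
      mem_of_superset (Ioo_mem_nhdsGT ht.2) fun x hx => ⟨ht.1.trans hx.1.le, hx.2.le⟩
    exact intervalIntegral.integral_hasDerivWithinAt_right
      ((hu.mono (Icc_subset_Icc_right ht.2.le)).intervalIntegrable_of_Icc ht.1)
      ((hu.stronglyMeasurableAtFilter_nhdsWithin measurableSet_Icc t).filter_mono
        (nhdsWithin_le_of_mem hmem))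
      ((hu t (Ico_subset_Icc_self ht)).mono_of_mem_nhdsWithin hmem)
  have hgr := le_gronwallBound_of_liminf_deriv_right_le (δ := 0) (K := L) (ε := A) hw
    (fun t ht r hr => (hw' t ht).liminf_right_slope_le hr) (by simp [w])
    (fun t ht => by linarith [h t (Icc_subset_Icc_right hT'.2 (Ico_subset_Icc_self ht))])
  calc u T' ≤ A + L * w T' := h T' hT'
    _ ≤ A + L * gronwallBound 0 L A (T' - 0) := by
        gcongr; exact hgr T' (right_mem_Icc.2 hT'.1)
    _ = A * Real.exp (L * T') := by
        rcases hL.eq_or_lt with rfl | hL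
        · simp [gronwallBound_K0]
        · rw [gronwallBound_of_K_ne_0 hL.ne', sub_zero]; field_simp; ring

theorem sq_lintegral_le_measure_univ_mul_lintegral_sq {α : Type*} [MeasurableSpace α]
    {μ : Measure α} {f : α → ℝ≥0∞} (hf : AEMeasurable f μ) :
    (∫⁻ x, f x ∂μ) ^ 2 ≤ μ univ * ∫⁻ x, f x ^ 2 ∂μ := by
  have h := ENNReal.lintegral_mul_le_Lp_mul_Lq μ Real.HolderConjugate.two_two hf
    (aemeasurable_const (b := 1))
  simp only [Pi.mul_apply, mul_one, ENNReal.rpow_two, one_pow, lintegral_const, one_mul] at h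
  have hsq : ∀ a : ℝ≥0∞, (a ^ (1 / 2 : ℝ)) ^ 2 = a := fun a => by
    rw [← ENNReal.rpow_natCast, ← ENNReal.rpow_mul]; norm_num
  calc (∫⁻ x, f x ∂μ) ^ 2
      ≤ ((∫⁻ x, f x ^ 2 ∂μ) ^ (1 / 2 : ℝ) * μ univ ^ (1 / 2 : ℝ)) ^ 2 := by gcongr
    _ = μ univ * ∫⁻ x, f x ^ 2 ∂μ := by rw [mul_pow, hsq, hsq, mul_comm]

theorem IsCompact.exists_pos_forall_of_forall_exists_pos_eventually {X : Type*}
    [TopologicalSpace X] {S : Set X} (hS : IsCompact S) {P : ℝ → X → Prop}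
    (hP : ∀ x δ δ', δ ≤ δ' → P δ' x → P δ x) (h : ∀ x ∈ S, ∃ δ > 0, ∀ᶠ y in 𝓝[S] x, P δ y) :
    ∃ δ > 0, ∀ y ∈ S, P δ y := by
  refine hS.induction_on ⟨1, one_pos, by simp⟩
    (fun s t hst ⟨δ, hδ, ht⟩ => ⟨δ, hδ, fun y hy => ht y (hst hy)⟩)
    (fun s t ⟨δ, hδ, hs⟩ ⟨δ', hδ', ht⟩ => ⟨min δ δ', lt_min hδ hδ', ?_⟩) fun x hx => ?_
  · rintro y (hy | hy)
    · exact hP y _ _ (min_le_left _ _) (hs y hy)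
    · exact hP y _ _ (min_le_right _ _) (ht y hy)
  · obtain ⟨δ, hδ, hev⟩ := h x hx
    exact ⟨{y | P δ y}, hev, δ, hδ, fun y hy => hy⟩

section Perturbation

variable {F : Type*} [NormedAddCommGroup F] [NormedSpace ℝ F]

theorem dist_le_of_isIntegralCurveOn {v w : F → F} {U : Set F} {L : ℝ≥0} {ε T : ℝ}
    (hε : 0 ≤ ε) (hv : LipschitzOnWith L v U) (hvw : ∀ y ∈ U, ‖v y - w y‖ ≤ ε) {f g : ℝ → F}
    (hf : IsIntegralCurveOn f (fun _ => v) (Icc 0 T)) (hfU : MapsTo f (Icc 0 T) U)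
    (hg : IsIntegralCurveOn g (fun _ => w) (Icc 0 T)) (hgU : MapsTo g (Icc 0 T) U) :
    ∀ t ∈ Icc 0 T, dist (f t) (g t) ≤ (dist (f 0) (g 0) + ε * T) * Real.exp (L * T) := by
  intro t ht
  calc dist (f t) (g t) ≤ gronwallBound (dist (f 0) (g 0)) L (0 + ε) (t - 0) :=
        dist_le_of_approx_trajectories_ODE_of_mem (fun _ _ => hv) hf.continuousOn
          (fun t ht => hf.hasDerivWithinAt_Ici subset_rfl ht) (fun _ _ => (dist_self _).le)
          (fun t ht => hfU (Ico_subset_Icc_self ht)) hg.continuousOn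
          (fun t ht => hg.hasDerivWithinAt_Ici subset_rfl ht)
          (fun t ht => by rw [dist_comm, dist_eq_norm]; exact hvw _ (hgU (Ico_subset_Icc_self ht)))
          (fun t ht => hgU (Ico_subset_Icc_self ht)) le_rfl t ht
    _ ≤ gronwallBound (dist (f 0) (g 0)) L ε T := by
        rw [zero_add, sub_zero]
        exact gronwallBound_mono dist_nonneg hε L.2 ht.2
    _ ≤ _ := gronwallBound_le_mul_exp L.2 hε

theorem exists_uniform_escape_margin {b : ℝ → F → F} {U K : Set F} {S : Set (ℝ × F)}
    {L : ℝ≥0} {κ T : ℝ} (hS : IsCompact S) (hK : IsClosed K) (hκ0 : 0 ≤ κ)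
    (hLip : ∀ p ∈ S, LipschitzOnWith L (b p.1) U)
    (hκ : ∀ p ∈ S, ∀ q ∈ S, ∀ y ∈ U, ‖b p.1 y - b q.1 y‖ ≤ κ * |p.1 - q.1|)
    {Ψ : ℝ × F → ℝ → F} (hΨ0 : ∀ p ∈ S, Ψ p 0 = p.2)
    (hΨ : ∀ p ∈ S, IsIntegralCurveOn (Ψ p) (fun _ => b p.1) (Icc 0 T))
    (hΨU : ∀ p ∈ S, MapsTo (Ψ p) (Icc 0 T) U) (hexit : ∀ p ∈ S, ∃ t ∈ Icc 0 T, Ψ p t ∉ K) :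
    ∃ δ > 0, ∀ p ∈ S, ∃ t ∈ Icc 0 T, ∀ y ∈ K, δ ≤ dist (Ψ p t) y := by
  refine hS.exists_pos_forall_of_forall_exists_pos_eventually
    (fun p δ δ' hδ ⟨t, ht, h⟩ => ⟨t, ht, fun y hy => hδ.trans (h y hy)⟩) fun p hp => ?_
  obtain ⟨t, ht, hout⟩ := hexit p hp
  obtain ⟨ε, hε, hball⟩ := Metric.isOpen_iff.1 hK.isOpen_compl _ hout
  have hT : 0 ≤ T := ht.1.trans ht.2
  set C := (1 + κ * T) * Real.exp (L * T)
  have hr : 0 < ε / (2 * C) := by positivity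
  refine ⟨ε / 2, half_pos hε, ?_⟩
  filter_upwards [self_mem_nhdsWithin, mem_nhdsWithin_of_mem_nhds (ball_mem_nhds p hr)]
    with q hq hpq
  have hpq' : dist p q < ε / (2 * C) := by rwa [mem_ball, dist_comm] at hpq
  have hclose : dist (Ψ p t) (Ψ q t) ≤ ε / 2 := by
    refine (dist_le_of_isIntegralCurveOn (mul_nonneg hκ0 (abs_nonneg _)) (hLip p hp)
      (hκ p hp q hq) (hΨ p hp) (hΨU p hp) (hΨ q hq) (hΨU q hq) t ht).trans ?_
    have h1 : dist (Ψ p 0) (Ψ q 0) ≤ ε / (2 * C) := by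
      rw [hΨ0 p hp, hΨ0 q hq]; exact (le_max_right _ _).trans hpq'.le
    have h2 : |p.1 - q.1| ≤ ε / (2 * C) := by
      rw [← Real.dist_eq]; exact (le_max_left _ _).trans hpq'.le
    calc (dist (Ψ p 0) (Ψ q 0) + κ * |p.1 - q.1| * T) * Real.exp (L * T)
        ≤ (ε / (2 * C) + κ * (ε / (2 * C)) * T) * Real.exp (L * T) := by gcongr
      _ = ε / 2 := by simp only [C]; field_simp
  refine ⟨t, ht, fun y hy => ?_⟩
  have hfar : ε ≤ dist (Ψ p t) y :=
    not_lt.1 fun h => hball (by rwa [mem_ball, dist_comm]) hy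
  linarith [dist_triangle (Ψ p t) (Ψ q t) y]

end Perturbation

theorem exists_isIntegralCurveOn_uniform_escape {F : Type*} [NormedAddCommGroup F]
    [InnerProductSpace ℝ F] [CompleteSpace F] {b : ℝ → F → F} {K : Set F} {R L : ℝ≥0} {κ T : ℝ}
    (hK : IsCompact K) (hKR : K ⊆ closedBall 0 R) (hκ0 : 0 ≤ κ)
    (hinv : ∀ s ∈ Icc (0 : ℝ) 1, ∀ y : F, R ≤ ‖y‖ → ⟪y, b s y⟫ ≤ 0)
    (hLip : ∀ s ∈ Icc (0 : ℝ) 1, LipschitzOnWith L (b s) (closedBall 0 (R + 1)))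
    (hκ : ∀ s ∈ Icc (0 : ℝ) 1, ∀ s' ∈ Icc (0 : ℝ) 1, ∀ y ∈ closedBall (0 : F) R,
      ‖b s y - b s' y‖ ≤ κ * |s - s'|)
    (hexit : ∀ s ∈ Icc (0 : ℝ) 1, ∀ x ∈ K, ∀ ψ : ℝ → F, ψ 0 = x →
      IsIntegralCurveOn ψ (fun _ => b s) (Ici 0) → ∃ t ∈ Icc 0 T, ψ t ∉ K) :
    ∃ δ > 0, ∀ s ∈ Icc (0 : ℝ) 1, ∀ x ∈ K, ∃ ψ : ℝ → F, ψ 0 = x ∧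
      IsIntegralCurveOn ψ (fun _ => b s) (Icc 0 T) ∧ MapsTo ψ (Icc 0 T) (closedBall 0 R) ∧
      ∃ t ∈ Icc 0 T, ∀ y ∈ K, δ ≤ dist (ψ t) y := by
  have hsol : ∀ p ∈ Icc (0 : ℝ) 1 ×ˢ K, ∃ ψ : ℝ → F, ψ 0 = p.2 ∧
      IsIntegralCurveOn ψ (fun _ => b p.1) (Ici 0) ∧ MapsTo ψ (Ici 0) (closedBall 0 R) :=
    fun p hp => exists_isIntegralCurveOn_Ici_mapsTo_closedBall (hinv p.1 hp.1) (hLip p.1 hp.1)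
      (hKR hp.2)
  choose! Ψ hΨ0 hΨ hΨR using hsol
  obtain ⟨δ, hδ, hesc⟩ := exists_uniform_escape_margin (isCompact_Icc.prod hK) hK.isClosed hκ0
    (fun p hp => (hLip p.1 hp.1).mono (closedBall_subset_closedBall (by simp)))
    (fun p hp q hq => hκ p.1 hp.1 q.1 hq.1) hΨ0 (fun p hp => (hΨ p hp).mono Icc_subset_Ici_self)
    (fun p hp => (hΨR p hp).mono_left Icc_subset_Ici_self)
    fun p hp => hexit p.1 hp.1 p.2 hp.2 (Ψ p) (hΨ0 p hp) (hΨ p hp)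
  refine ⟨δ, hδ, fun s hs x hx => ⟨Ψ (s, x), hΨ0 _ ⟨hs, hx⟩, (hΨ _ ⟨hs, hx⟩).mono
    Icc_subset_Ici_self, (hΨR _ ⟨hs, hx⟩).mono_left Icc_subset_Ici_self, hesc _ ⟨hs, hx⟩⟩⟩

theorem norm_sub_le_integral_mul_exp {F : Type*} [NormedAddCommGroup F] [NormedSpace ℝ F]
    [CompleteSpace F] {v : F → F} {U : Set F} {L : ℝ≥0}
    (hv : LipschitzOnWith L v U) {φ ψ g : ℝ → F} {T : ℝ} (hg : IntegrableOn g (Ioc 0 T))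
    (hφ : ∀ t ∈ Icc 0 T, φ t = φ 0 + ∫ u in 0..t, g u) (hφc : ContinuousOn φ (Icc 0 T))
    (hφU : MapsTo φ (Icc 0 T) U) (hψ : IsIntegralCurveOn ψ (fun _ => v) (Icc 0 T))
    (hψU : MapsTo ψ (Icc 0 T) U) (h0 : ψ 0 = φ 0) :
    ∀ t ∈ Icc 0 T, ‖φ t - ψ t‖ ≤ (∫ u in Ioc 0 T, ‖g u - v (φ u)‖) * Real.exp (L * t) := by
  set A := ∫ u in Ioc 0 T, ‖g u - v (φ u)‖
  have hvφ : ContinuousOn (fun u => v (φ u)) (Icc 0 T) := hv.continuousOn.comp hφc hφU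
  have hvψ : ContinuousOn (fun u => v (ψ u)) (Icc 0 T) :=
    hv.continuousOn.comp hψ.continuousOn hψU
  have hiv : ∀ {f : ℝ → F}, ContinuousOn f (Icc 0 T) → ∀ t ∈ Icc 0 T,
      IntervalIntegrable f volume 0 t := fun hf t ht =>
    (hf.mono (Icc_subset_Icc_right ht.2)).intervalIntegrable_of_Icc ht.1
  have hgi : ∀ t ∈ Icc 0 T, IntervalIntegrable g volume 0 t := fun t ht =>
    (intervalIntegrable_iff_integrableOn_Ioc_of_le ht.1).2
      (hg.mono_set (Ioc_subset_Ioc_right ht.2))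
  have hψ_eq : ∀ t ∈ Icc 0 T, ∫ u in 0..t, v (ψ u) = ψ t - ψ 0 := fun t ht =>
    (hψ.mono (Icc_subset_Icc_right ht.2)).integral_eq_sub ht.1 (hiv hvψ t ht)
  refine le_mul_exp_of_le_add_mul_integral L.2 (hφc.sub hψ.continuousOn).norm fun t ht => ?_
  have hsplit : φ t - ψ t = (∫ u in 0..t, g u - v (φ u)) + ∫ u in 0..t, v (φ u) - v (ψ u) := by
    rw [intervalIntegral.integral_sub (hgi t ht) (hiv hvφ t ht),
      intervalIntegral.integral_sub (hiv hvφ t ht) (hiv hvψ t ht), hψ_eq t ht, hφ t ht, h0]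
    abel
  have h1 : ‖∫ u in 0..t, g u - v (φ u)‖ ≤ A :=
    calc _ ≤ ∫ u in 0..t, ‖g u - v (φ u)‖ := intervalIntegral.norm_integral_le_integral_norm ht.1
      _ = ∫ u in Ioc 0 t, ‖g u - v (φ u)‖ := intervalIntegral.integral_of_le ht.1
      _ ≤ A := setIntegral_mono_set
          (hg.sub (hvφ.integrableOn_Icc.mono_set Ioc_subset_Icc_self)).norm
          (ae_of_all _ fun _ => norm_nonneg _) (Ioc_subset_Ioc_right ht.2).eventuallyLE
  have h2 : ‖∫ u in 0..t, v (φ u) - v (ψ u)‖ ≤ L * ∫ u in 0..t, ‖φ u - ψ u‖ := by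
    rw [← intervalIntegral.integral_const_mul]
    refine intervalIntegral.norm_integral_le_of_norm_le ht.1 (ae_of_all _ fun u hu => ?_)
      ((((hφc.sub hψ.continuousOn).norm.mono (Icc_subset_Icc_right ht.2)).intervalIntegrable_of_Icc
        ht.1).const_mul _)
    have hu' : u ∈ Icc 0 T := ⟨hu.1.le, hu.2.trans ht.2⟩
    exact hv.norm_sub_le (hφU hu') (hψU hu')
  calc ‖φ t - ψ t‖ ≤ _ := hsplit ▸ norm_add_le _ _
    _ ≤ A + L * ∫ u in 0..t, ‖φ u - ψ u‖ := add_le_add h1 h2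

theorem le_frozenRate_of_le_dist {d : ℕ}
    {b : ℝ → EuclideanSpace ℝ (Fin d) → EuclideanSpace ℝ (Fin d)} {s T δ : ℝ} {L : ℝ≥0}
    {U : Set (EuclideanSpace ℝ (Fin d))} (hv : LipschitzOnWith L (b s) U)
    {φ ψ : ℝ → EuclideanSpace ℝ (Fin d)} (hφ : ContinuousOn φ (Icc 0 T))
    (hφU : MapsTo φ (Icc 0 T) U) (hψ : IsIntegralCurveOn ψ (fun _ => b s) (Icc 0 T))
    (hψU : MapsTo ψ (Icc 0 T) U) (h0 : ψ 0 = φ 0) {t₁ : ℝ} (ht₁ : t₁ ∈ Icc 0 T)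
    (hδ : δ ≤ dist (φ t₁) (ψ t₁)) :
    ENNReal.ofReal (δ * Real.exp (-(L * T))) ^ 2 / (2 * ENNReal.ofReal T) ≤
      frozenRate b s T φ := by
  refine le_iInf₂ fun g ⟨hg2, hgφ⟩ => ENNReal.div_le_of_le_mul ?_
  have hg : IntegrableOn g (Ioc 0 T) := hg2.integrable one_le_two
  set h := fun u => g u - b s (φ u)
  have hh : IntegrableOn h (Ioc 0 T) :=
    hg.sub ((hv.continuousOn.comp hφ hφU).integrableOn_Icc.mono_set Ioc_subset_Icc_self)
  set A := ∫ u in Ioc 0 T, ‖h u‖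
  have hA : δ * Real.exp (-(L * T)) ≤ A := by
    have hdev := norm_sub_le_integral_mul_exp hv hg hgφ hφ hφU hψ hψU h0 t₁ ht₁
    have hA0 : 0 ≤ A := setIntegral_nonneg measurableSet_Ioc fun _ _ => norm_nonneg _
    rw [Real.exp_neg, ← div_eq_mul_inv, div_le_iff₀ (Real.exp_pos _)]
    rw [dist_eq_norm] at hδ
    exact hδ.trans (hdev.trans (mul_le_mul_of_nonneg_left
      (Real.exp_le_exp.2 (mul_le_mul_of_nonneg_left ht₁.2 L.2)) hA0))
  have hE : ∫⁻ u in Ioc 0 T, ‖h u‖ₑ ^ 2 =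
      2 * ∫⁻ u in Ioc 0 T, ENNReal.ofReal (1 / 2 * ‖h u‖ ^ 2) := by
    rw [← lintegral_const_mul' _ _ ENNReal.ofNat_ne_top]
    refine lintegral_congr fun u => ?_
    have key : ∀ r : ℝ, 0 ≤ r → ENNReal.ofReal r ^ 2 = 2 * ENNReal.ofReal (1 / 2 * r ^ 2) :=
      fun r hr => by
        rw [← ENNReal.ofReal_pow hr, ← ENNReal.ofReal_ofNat 2, ← ENNReal.ofReal_mul zero_le_two]
        ring_nf
    rw [← ofReal_norm, key _ (norm_nonneg _)]
  calc ENNReal.ofReal (δ * Real.exp (-(L * T))) ^ 2 ≤ ENNReal.ofReal A ^ 2 := by gcongr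
    _ = (∫⁻ u in Ioc 0 T, ‖h u‖ₑ) ^ 2 := by rw [ofReal_integral_norm_eq_lintegral_enorm hh]
    _ ≤ volume.restrict (Ioc 0 T) univ * ∫⁻ u in Ioc 0 T, ‖h u‖ₑ ^ 2 :=
        sq_lintegral_le_measure_univ_mul_lintegral_sq hh.aestronglyMeasurable.enorm
    _ = _ := by rw [Measure.restrict_apply_univ, Real.volume_Ioc, sub_zero, hE]; ring

theorem confined_minimal_energy_positive_general {d : ℕ}
    (b : ℝ → EuclideanSpace ℝ (Fin d) → EuclideanSpace ℝ (Fin d))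
    (hLipX : ∀ R > (0:ℝ), ∀ x : EuclideanSpace ℝ (Fin d), ∃ K ≥ (0:ℝ),
      ∀ t ≥ (0:ℝ), ∀ y₁ ∈ Metric.closedBall x R, ∀ y₂ ∈ Metric.closedBall x R,
        ‖b t y₁ - b t y₂‖ ≤ K * ‖y₁ - y₂‖)
    (hLipT : ∀ R > (0:ℝ), ∀ x : EuclideanSpace ℝ (Fin d), ∃ κ ≥ (0:ℝ),
      ∀ s ≥ (0:ℝ), ∀ t ≥ (0:ℝ), ∀ y ∈ Metric.closedBall x R,
        ‖b t y - b s y‖ ≤ κ * |t - s|)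
    (hgrow : ∃ η > (0:ℝ), ∃ R₀ > (0:ℝ), ∀ t ≥ (0:ℝ),
      ∀ x : EuclideanSpace ℝ (Fin d), R₀ ≤ ‖x‖ → ⟪x, b t x⟫ < -η * ‖x‖)
    (K : Set (EuclideanSpace ℝ (Fin d))) (hKc : IsCompact K)
    (T₀ : ℝ) (hT₀pos : 0 < T₀)
    (hT₀ : ∀ s ∈ Icc (0:ℝ) 1, ∀ x ∈ K, ∀ φ : ℝ → EuclideanSpace ℝ (Fin d),
      φ 0 = x → (∀ t ∈ Ici (0:ℝ), HasDerivWithinAt φ (b s (φ t)) (Ici (0:ℝ)) t) →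
      ∃ t, 0 ≤ t ∧ t < T₀ ∧ φ t ∉ K) :
    0 < ⨅ s ∈ Icc (0:ℝ) 1,
        ⨅ φ ∈ {φ : ℝ → EuclideanSpace ℝ (Fin d) |
            ContinuousOn φ (Icc (0:ℝ) T₀) ∧ ∀ t ∈ Icc (0:ℝ) T₀, φ t ∈ K},
          frozenRate b s T₀ φ := by
  obtain ⟨η, hη, R₀, hR₀, hgr⟩ := hgrow
  obtain ⟨R, hR₀R, hKR⟩ := hKc.isBounded.subset_closedBall_lt R₀ 0
  lift R to ℝ≥0 using (hR₀.trans hR₀R).le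
  obtain ⟨L, hL0, hL⟩ := hLipX (R + 1) (by positivity) 0
  lift L to ℝ≥0 using hL0
  obtain ⟨κ, hκ0, hκ⟩ := hLipT (R + 1) (by positivity) 0
  have hLip : ∀ s ≥ (0:ℝ), LipschitzOnWith L (b s) (closedBall 0 (R + 1)) := fun s hs =>
    .of_dist_le_mul fun x hx y hy => by simpa only [dist_eq_norm] using hL s hs x hx y hy
  obtain ⟨δ, hδ, hesc⟩ := exists_isIntegralCurveOn_uniform_escape hKc hKR hκ0
    (fun s hs y hy => by nlinarith [hgr s hs.1 y (hR₀R.le.trans hy), norm_nonneg y])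
    (fun s hs => hLip s hs.1)
    (fun s hs s' hs' y hy => hκ s' hs'.1 s hs.1 y (closedBall_subset_closedBall (by simp) hy))
    fun s hs x hx ψ hψ0 hψ => by
      obtain ⟨t, ht0, htT, hout⟩ := hT₀ s hs x hx ψ hψ0 hψ
      exact ⟨t, ⟨ht0, htT.le⟩, hout⟩
  calc (0 : ℝ≥0∞) < ENNReal.ofReal (δ * Real.exp (-(L * T₀))) ^ 2 / (2 * ENNReal.ofReal T₀) :=
        ENNReal.div_pos (pow_ne_zero _ (ENNReal.ofReal_pos.2 (by positivity)).ne')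
          (ENNReal.mul_ne_top ENNReal.ofNat_ne_top ENNReal.ofReal_ne_top)
    _ ≤ _ := le_iInf₂ fun s hs => le_iInf₂ fun φ ⟨hφc, hφK⟩ => by
      obtain ⟨ψ, hψ0, hψ, hψR, t₁, ht₁, hfar⟩ := hesc s hs (φ 0) (hφK 0 ⟨le_rfl, hT₀pos.le⟩)
      exact le_frozenRate_of_le_dist ((hLip s hs.1).mono (closedBall_subset_closedBall (by simp)))
        hφc (fun t ht => hKR (hφK t ht)) hψ hψR hψ0 ht₁
        (by rw [dist_comm]; exact hfar _ (hφK t₁ ht₁))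

/-- if every deterministic solution started in the compact set
`K ⊆ A_− \ {x_−}` exits `K` before time `T₀`, then the minimal energy of paths
confined to `K` up to time `T₀` is strictly positive, uniformly in `s ∈ [0,1]`. -/
theorem confined_minimal_energy_positive {d : ℕ} (hd : 1 ≤ d)
    (b : ℝ → EuclideanSpace ℝ (Fin d) → EuclideanSpace ℝ (Fin d))
    (hper : ∀ t ≥ (0:ℝ), ∀ x, b (t + 1) x = b t x)
    (hLipX : ∀ R > (0:ℝ), ∀ x : EuclideanSpace ℝ (Fin d), ∃ K ≥ (0:ℝ),
      ∀ t ≥ (0:ℝ), ∀ y₁ ∈ Metric.closedBall x R, ∀ y₂ ∈ Metric.closedBall x R,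
        ‖b t y₁ - b t y₂‖ ≤ K * ‖y₁ - y₂‖)
    (hLipT : ∀ R > (0:ℝ), ∀ x : EuclideanSpace ℝ (Fin d), ∃ κ ≥ (0:ℝ),
      ∀ s ≥ (0:ℝ), ∀ t ≥ (0:ℝ), ∀ y ∈ Metric.closedBall x R,
        ‖b t y - b s y‖ ≤ κ * |t - s|)
    (hgrow : ∃ η > (0:ℝ), ∃ R₀ > (0:ℝ), ∀ t ≥ (0:ℝ),
      ∀ x : EuclideanSpace ℝ (Fin d), R₀ ≤ ‖x‖ → ⟪x, b t x⟫ < -η * ‖x‖)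
    (xm xp : EuclideanSpace ℝ (Fin d)) (Am Ap : Set (EuclideanSpace ℝ (Fin d)))
    (heqm : ∀ s ≥ (0:ℝ), b s xm = 0) (heqp : ∀ s ≥ (0:ℝ), b s xp = 0)
    (hAm : ∀ s ≥ (0:ℝ), Am = {y | ∀ φ : ℝ → EuclideanSpace ℝ (Fin d),
        (∀ t ∈ Ici (0:ℝ), HasDerivWithinAt φ (b s (φ t)) (Ici (0:ℝ)) t) → φ 0 = y →
        Tendsto φ atTop (𝓝 xm)})
    (hAp : ∀ s ≥ (0:ℝ), Ap = {y | ∀ φ : ℝ → EuclideanSpace ℝ (Fin d),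
        (∀ t ∈ Ici (0:ℝ), HasDerivWithinAt φ (b s (φ t)) (Ici (0:ℝ)) t) → φ 0 = y →
        Tendsto φ atTop (𝓝 xp)})
    (hxm : xm ∈ Am) (hxp : xp ∈ Ap)
    (hcl : closure (Am ∪ Ap) = univ)
    (hbd : frontier Am = frontier Ap)
    (K : Set (EuclideanSpace ℝ (Fin d))) (hKc : IsCompact K) (hK : K ⊆ Am \ {xm})
    (T₀ : ℝ) (hT₀pos : 0 < T₀)
    (hT₀ : ∀ s ∈ Icc (0:ℝ) 1, ∀ x ∈ K, ∀ φ : ℝ → EuclideanSpace ℝ (Fin d),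
      φ 0 = x → (∀ t ∈ Ici (0:ℝ), HasDerivWithinAt φ (b s (φ t)) (Ici (0:ℝ)) t) →
      ∃ t, 0 ≤ t ∧ t < T₀ ∧ φ t ∉ K) :
    0 < ⨅ s ∈ Icc (0:ℝ) 1,
        ⨅ φ ∈ {φ : ℝ → EuclideanSpace ℝ (Fin d) |
            ContinuousOn φ (Icc (0:ℝ) T₀) ∧ ∀ t ∈ Icc (0:ℝ) T₀, φ t ∈ K},
          frozenRate b s T₀ φ :=
  confined_minimal_energy_positive_general b hLipX hLipT hgrow K hKc T₀ hT₀pos hT₀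
end

section
/- (Auxiliary to Theorem 3.4) Under the hypotheses below, the derivative e′ restricted to (t₁, t₂) attains a strict global minimum at s, and for every sufficiently small h > 0 there exists a unique point a(h) ∈ (t₁ + h, t₂) such that e′(a(h) − h) = e′(a(h)); moreover a(h) − h < s < a(h), and a(h) → s as h → 0. -/
/-! On `[t₁, t₂]` the derivative `e′` is a strictly decreasing function on `[t₁, s]` followed by a
strictly increasing one on `[s, t₂]`, so `s` is its strict minimum. If `e′(a - h) = e′(a)` with
both points in `[t₁, t₂]`, they cannot lie on the same monotone branch, hence `a - h < s < a`; in
particular `|a - s| < h`. On the window where `a - h ∈ [t₁, s]` and `a ∈ [s, t₂]` the difference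
`e′(a) - e′(a - h)` is strictly increasing, which gives uniqueness, and it changes sign between
`a = t₁ + h` and `a = t₂` once `h ≤ min (s - t₁) (t₂ - s)`, which gives existence. -/

open Set

section Valley

variable {f : ℝ → ℝ} {a b c h : ℝ}

theorem lt_apply_of_strictAntiOn_of_strictMonoOn (hanti : StrictAntiOn f (Icc a c))
    (hmono : StrictMonoOn f (Icc c b)) {u : ℝ} (hu : u ∈ Icc a b) (hne : u ≠ c) :
    f c < f u := by
  rcases hne.lt_or_gt with hlt | hgt
  · exact hanti ⟨hu.1, hlt.le⟩ (right_mem_Icc.2 (hu.1.trans hlt.le)) hlt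
  · exact hmono (left_mem_Icc.2 (hgt.le.trans hu.2)) ⟨hgt.le, hu.2⟩ hgt

theorem mem_Ioo_of_apply_eq_of_strictAntiOn_of_strictMonoOn (hanti : StrictAntiOn f (Icc a c))
    (hmono : StrictMonoOn f (Icc c b)) {x y : ℝ} (hx : x ∈ Icc a b) (hy : y ∈ Icc a b)
    (hxy : x < y) (heq : f x = f y) : c ∈ Ioo x y := by
  constructor
  · by_contra! hcx
    exact (hmono ⟨hcx, hx.2⟩ ⟨hcx.trans hxy.le, hy.2⟩ hxy).ne heq
  · by_contra! hyc
    exact (hanti ⟨hx.1, hxy.le.trans hyc⟩ ⟨hy.1, hyc⟩ hxy).ne' heq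

theorem strictMonoOn_sub_apply_sub_of_strictAntiOn_of_strictMonoOn
    (hanti : StrictAntiOn f (Icc a c)) (hmono : StrictMonoOn f (Icc c b)) :
    StrictMonoOn (fun x => f x - f (x - h)) (Icc c (c + h) ∩ Icc (a + h) b) := by
  intro x ⟨hx, hx'⟩ y ⟨hy, hy'⟩ hxy
  have hfxy : f x < f y := hmono ⟨hx.1, hx'.2⟩ ⟨hy.1, hy'.2⟩ hxy
  have hfxy' : f (y - h) < f (x - h) :=
    hanti ⟨by linarith [hx'.1], by linarith [hx.2]⟩ ⟨by linarith [hy'.1], by linarith [hy.2]⟩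
      (by linarith)
  simp only
  linarith

theorem exists_apply_sub_eq_of_strictAntiOn_of_strictMonoOn (hf : ContinuousOn f (Icc a b))
    (hanti : StrictAntiOn f (Icc a c)) (hmono : StrictMonoOn f (Icc c b)) (hh : 0 < h)
    (hha : h ≤ c - a) (hhb : h ≤ b - c) : ∃ x ∈ Ioo (a + h) b, f (x - h) = f x := by
  have hleft : f (a + h) - f (a + h - h) < 0 := by
    rw [add_sub_cancel_right, sub_neg]
    exact hanti (left_mem_Icc.2 (by linarith)) ⟨by linarith, by linarith⟩ (by linarith)
  have hright : 0 < f b - f (b - h) :=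
    sub_pos.2 <| hmono ⟨by linarith, by linarith⟩ (right_mem_Icc.2 (by linarith)) (by linarith)
  have hcont : ContinuousOn (fun x => f x - f (x - h)) (Icc (a + h) b) := by
    refine (hf.mono (Icc_subset_Icc (by linarith) le_rfl)).sub
      (hf.comp (continuousOn_id.sub continuousOn_const) fun x hx => ?_)
    exact ⟨by linarith [hx.1], by linarith [hx.2]⟩
  obtain ⟨x, hx, hx0⟩ := intermediate_value_Ioo (by linarith) hcont ⟨hleft, hright⟩
  exact ⟨x, hx, (sub_eq_zero.1 hx0).symm⟩

end Valley

theorem inflection_point_balance_general (e : ℝ → ℝ)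
    (hC2 : ContDiff ℝ 2 e)
    (t₁ t₂ : ℝ)
    (s : ℝ) (hs : s ∈ Ioo t₁ t₂)
    (hconc : ∀ u ∈ Ioo t₁ s, deriv (deriv e) u < 0)
    (hconv : ∀ u ∈ Ioo s t₂, 0 < deriv (deriv e) u) :
    (∀ u ∈ Ioo t₁ t₂, u ≠ s → deriv e s < deriv e u) ∧
    (∃ h₀ > (0:ℝ), ∀ h : ℝ, 0 < h → h ≤ h₀ →
      (∃! a : ℝ, a ∈ Ioo (t₁ + h) t₂ ∧ deriv e (a - h) = deriv e a) ∧
      (∀ a ∈ Ioo (t₁ + h) t₂, deriv e (a - h) = deriv e a → a - h < s ∧ s < a)) ∧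
    (∀ ε > (0:ℝ), ∃ h₁ > (0:ℝ), ∀ h : ℝ, 0 < h → h < h₁ →
      ∀ a ∈ Ioo (t₁ + h) t₂, deriv e (a - h) = deriv e a → |a - s| < ε) := by
  have hcont : Continuous (deriv e) := hC2.continuous_deriv (by norm_num)
  have hanti : StrictAntiOn (deriv e) (Icc t₁ s) :=
    strictAntiOn_of_deriv_neg (convex_Icc _ _) hcont.continuousOn (by rwa [interior_Icc])
  have hmono : StrictMonoOn (deriv e) (Icc s t₂) :=
    strictMonoOn_of_deriv_pos (convex_Icc _ _) hcont.continuousOn (by rwa [interior_Icc])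
  have sandwich : ∀ h : ℝ, 0 < h → ∀ a ∈ Ioo (t₁ + h) t₂, deriv e (a - h) = deriv e a →
      a - h < s ∧ s < a := fun h hh a ha heq =>
    mem_Ioo_of_apply_eq_of_strictAntiOn_of_strictMonoOn hanti hmono
      ⟨by linarith [ha.1], by linarith [ha.2]⟩ ⟨by linarith [ha.1], ha.2.le⟩ (by linarith) heq
  refine ⟨fun u hu hne => lt_apply_of_strictAntiOn_of_strictMonoOn hanti hmono
      (Ioo_subset_Icc_self hu) hne,
    ⟨min (s - t₁) (t₂ - s), lt_min (sub_pos.2 hs.1) (sub_pos.2 hs.2), fun h hh hle =>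
      ⟨?_, sandwich h hh⟩⟩,
    fun ε hε => ⟨ε, hε, fun h hh hhε a ha heq => ?_⟩⟩
  · obtain ⟨a, ha, heq⟩ := exists_apply_sub_eq_of_strictAntiOn_of_strictMonoOn hcont.continuousOn
      hanti hmono hh (hle.trans (min_le_left _ _)) (hle.trans (min_le_right _ _))
    have hwindow : ∀ b ∈ Ioo (t₁ + h) t₂, deriv e (b - h) = deriv e b →
        b ∈ Icc s (s + h) ∩ Icc (t₁ + h) t₂ := fun b hb hbeq =>
      have ⟨hl, hr⟩ := sandwich h hh b hb hbeq
      ⟨⟨hr.le, by linarith⟩, Ioo_subset_Icc_self hb⟩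
    refine ⟨a, ⟨ha, heq⟩, fun b ⟨hb, hbeq⟩ => ?_⟩
    exact (strictMonoOn_sub_apply_sub_of_strictAntiOn_of_strictMonoOn hanti hmono).injOn
      (hwindow b hb hbeq) (hwindow a ha heq) (by simp only [hbeq, heq, sub_self])
  · have ⟨hl, hr⟩ := sandwich h hh a ha heq
    exact abs_sub_lt_iff.2 ⟨by linarith, by linarith⟩

/-- auxiliary to Theorem 3.4: the derivative `e′` attains a strict
global minimum on `(t₁, t₂)` at the inflection point `s`; for small `h > 0` there is a
unique `a(h) ∈ (t₁ + h, t₂)` with `e′(a(h) − h) = e′(a(h))`, it satisfies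
`a(h) − h < s < a(h)`, and `a(h) → s` as `h → 0`. -/
theorem inflection_point_balance (e : ℝ → ℝ)
    (hper : ∀ t, e (t + 1) = e t)
    (hC2 : ContDiff ℝ 2 e)
    (t₁ t₂ : ℝ) (h12 : t₁ < t₂) (h21 : t₂ < t₁ + 1)
    (hmax : ∀ t, e t ≤ e t₁) (hmin : ∀ t, e t₂ ≤ e t)
    (hdec : StrictAntiOn e (Ioo t₁ t₂))
    (s : ℝ) (hs : s ∈ Ioo t₁ t₂)
    (hconc : ∀ u ∈ Ioo t₁ s, deriv (deriv e) u < 0)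
    (hconv : ∀ u ∈ Ioo s t₂, 0 < deriv (deriv e) u) :
    (∀ u ∈ Ioo t₁ t₂, u ≠ s → deriv e s < deriv e u) ∧
    (∃ h₀ > (0:ℝ), ∀ h : ℝ, 0 < h → h ≤ h₀ →
      (∃! a : ℝ, a ∈ Ioo (t₁ + h) t₂ ∧ deriv e (a - h) = deriv e a) ∧
      (∀ a ∈ Ioo (t₁ + h) t₂, deriv e (a - h) = deriv e a → a - h < s ∧ s < a)) ∧
    (∀ ε > (0:ℝ), ∃ h₁ > (0:ℝ), ∀ h : ℝ, 0 < h → h < h₁ →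
      ∀ a ∈ Ioo (t₁ + h) t₂, deriv e (a - h) = deriv e a → |a - s| < ε) :=
  inflection_point_balance_general e hC2 t₁ t₂ s hs hconc hconv
end
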